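/- arXiv:1106.0688 — 3 statements merged into one kernel-verified Lean document; each statement's English description precedes it below -/
import Mathlib

section
/- Let N ≥ 2 and let A = {a₁, …, a_N} be a free basis of F_N. If Φ is an automorphism of F_N such that Φ(u) is conjugate to u in F_N for every element u ∈ F_N whose reduced word over A has length at most 2, then Φ is an inner automorphism of F_N. -/
/-!
Composing `Φ` with an inner automorphism we may assume that `Φ` fixes a generator `a`. For another
generator `b` we have `Φ b = w b w⁻¹`, and `Φ (a b) = a w b w⁻¹` is conjugate to `a b`. The
conjugacy invariant that forces `w ∈ ⟨a⟩⟨b⟩` is the length of the cyclic reduction: it is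
invariant under conjugation because `‖xⁿ‖` grows like `n` times it, and once the leading `a`-letters
and trailing `b`-letters of `w` are stripped off (which only conjugates `a w b w⁻¹` by a power of
`a`), the word `a w b w⁻¹` is cyclically reduced of length `2 |w| + 2`. Hence `Φ b = aᵏ b a⁻ᵏ`.
Doing the same with `Φ (b c)` and comparing exponent sums of `a` shows that `k` does not depend on
`b`, so `Φ` is conjugation by `aᵏ`.
-/

namespace FreeGroup

open reduceCyclically

variable {α : Type*}

theorem exists_mk_singleton_eq_zpow (c : α × Bool) : ∃ e : ℤ, mk [c] = of c.1 ^ e := by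
  obtain ⟨a, _ | _⟩ := c
  · exact ⟨-1, by simp [of, inv_mk, invRev]⟩
  · exact ⟨1, by simp [of]⟩

variable [DecidableEq α]

theorem IsReduced.invRev {L : List (α × Bool)} (h : IsReduced L) : IsReduced (invRev L) := by
  rw [isReduced_iff_reduce_eq, reduce_invRev, h.reduce_eq]

def cyclicLength (x : FreeGroup α) : ℕ := (reduceCyclically x.toWord).length

theorem norm_pow_succ (x : FreeGroup α) (n : ℕ) :
    norm (x ^ (n + 1)) = 2 * (conjugator x.toWord).length + (n + 1) * cyclicLength x := by
  rw [norm, toWord_pow, reduce_flatten_replicate_succ isReduced_toWord]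
  simp only [List.append_assoc, List.length_append, List.length_flatten, List.map_replicate,
    List.sum_replicate, smul_eq_mul, invRev_length, cyclicLength]
  ring

theorem cyclicLength_conj_le (g x : FreeGroup α) :
    cyclicLength (g * x * g⁻¹) ≤ cyclicLength x := by
  set n := 2 * norm g + 2 * (conjugator x.toWord).length
  have hpow : (g * x * g⁻¹) ^ (n + 1) = g * x ^ (n + 1) * g⁻¹ := by simp [conj_pow]
  have hle : (n + 1) * cyclicLength (g * x * g⁻¹) ≤ n + (n + 1) * cyclicLength x :=
    calc (n + 1) * cyclicLength (g * x * g⁻¹) ≤ norm ((g * x * g⁻¹) ^ (n + 1)) := by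
          rw [norm_pow_succ]; omega
      _ ≤ norm g + norm (x ^ (n + 1)) + norm g⁻¹ := by
          rw [hpow]; exact (norm_mul_le _ _).trans (by gcongr; exact norm_mul_le _ _)
      _ = n + (n + 1) * cyclicLength x := by rw [norm_pow_succ, norm_inv_eq]; omega
  by_contra! hlt
  nlinarith

theorem cyclicLength_conj (g x : FreeGroup α) : cyclicLength (g * x * g⁻¹) = cyclicLength x :=
  (cyclicLength_conj_le g x).antisymm <| by
    simpa [mul_assoc] using cyclicLength_conj_le g⁻¹ (g * x * g⁻¹)

theorem cyclicLength_eq_of_isConj {x y : FreeGroup α} (h : IsConj x y) :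
    cyclicLength x = cyclicLength y := by
  obtain ⟨g, rfl⟩ := isConj_iff.mp h
  exact (cyclicLength_conj g x).symm

theorem cyclicLength_mk_cons_append {a b : α × Bool} {L : List (α × Bool)}
    (hred : IsReduced (a :: (L ++ [b]))) (hab : b.1 = a.1 → b.2 = a.2) :
    cyclicLength (mk (a :: (L ++ [b]))) = L.length + 2 := by
  have hcyc : ¬(b.1 = a.1 ∧ (!b.2) = a.2) := fun h => by simp [hab h.1] at h
  rw [cyclicLength, toWord_mk, hred.reduce_eq, reduceCyclically.cons_append, if_neg hcyc]
  simp

theorem isReduced_cons_append_cons_invRev {x y : α} (hxy : x ≠ y) {w : List (α × Bool)}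
    (hw : IsReduced w) (hx : ∀ c ∈ w.head?, c.1 ≠ x) (hy : ∀ c ∈ w.getLast?, c.1 ≠ y) :
    IsReduced ((x, true) :: (w ++ (y, true) :: invRev w)) := by
  have hwy : ∀ s, IsReduced (w ++ [(y, s)]) := fun s =>
    List.isChain_append.mpr ⟨hw, List.isChain_singleton _, fun c hc d hd => by
      obtain rfl : (y, s) = d := by simpa using hd
      exact fun h => absurd h (hy c hc)⟩
  have hmid : IsReduced (w ++ [(y, true)] ++ invRev w) := by
    refine IsReduced.append_overlap (hwy true) ?_ (List.cons_ne_nil _ _)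
    simpa [invRev_append, invRev] using (hwy false).invRev
  rw [List.append_cons w]
  refine List.isChain_cons.mpr ⟨?_, hmid⟩
  cases w with
  | nil => simp [hxy]
  | cons d w => rintro _ ⟨⟩ h; exact absurd h.symm (hx d rfl)

theorem cyclicLength_of_mul_conj_of {x y : α} (hxy : x ≠ y) {w : List (α × Bool)}
    (hw : IsReduced w) (hx : ∀ c ∈ w.head?, c.1 ≠ x) (hy : ∀ c ∈ w.getLast?, c.1 ≠ y) :
    cyclicLength (of x * mk w * of y * (mk w)⁻¹) = 2 * w.length + 2 := by
  have hred := isReduced_cons_append_cons_invRev hxy hw hx hy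
  have hmk : of x * mk w * of y * (mk w)⁻¹ = mk ((x, true) :: (w ++ (y, true) :: invRev w)) := by
    simp [of, mul_mk, inv_mk]
  rw [hmk]
  cases w with
  | nil => simpa using cyclicLength_mk_cons_append (L := []) hred (by simp [Ne.symm hxy])
  | cons d w =>
    have hword : (x, true) :: (d :: w ++ (y, true) :: invRev (d :: w)) =
        (x, true) :: ((d :: w ++ (y, true) :: invRev w) ++ [(d.1, !d.2)]) := by
      simp [invRev]
    rw [hword] at hred ⊢
    rw [cyclicLength_mk_cons_append hred fun h => absurd h (hx d rfl)]
    simp only [List.cons_append, List.length_cons, List.length_append, invRev_length]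
    omega

theorem exists_mk_eq_zpow_mul_zpow_of_cyclicLength {x y : α} (hxy : x ≠ y)
    (w : List (α × Bool)) (hw : IsReduced w)
    (h : cyclicLength (of x * mk w * of y * (mk w)⁻¹) = 2) :
    ∃ k m : ℤ, mk w = of x ^ k * of y ^ m := by
  by_cases hx : ∃ c ∈ w.head?, c.1 = x
  · obtain ⟨c, hc, hcx⟩ := hx
    obtain ⟨w, rfl⟩ := List.head?_eq_some_iff.mp hc
    obtain ⟨e, he⟩ := exists_mk_singleton_eq_zpow c
    rw [hcx] at he
    have hsplit : mk (c :: w) = of x ^ e * mk w := by rw [← he, mul_mk]; rfl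
    have hconj : of x * mk (c :: w) * of y * (mk (c :: w))⁻¹ =
        of x ^ e * (of x * mk w * of y * (mk w)⁻¹) * (of x ^ e)⁻¹ := by
      rw [hsplit]; group
    obtain ⟨k, m, hkm⟩ := exists_mk_eq_zpow_mul_zpow_of_cyclicLength hxy w hw.tail
      (by rw [← h, hconj, cyclicLength_conj])
    exact ⟨e + k, m, by rw [hsplit, hkm, zpow_add, mul_assoc]⟩
  by_cases hy : ∃ c ∈ w.getLast?, c.1 = y
  · obtain ⟨c, hc, hcy⟩ := hy
    obtain ⟨w, rfl⟩ := List.getLast?_eq_some_iff.mp hc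
    obtain ⟨e, he⟩ := exists_mk_singleton_eq_zpow c
    rw [hcy] at he
    have hsplit : mk (w ++ [c]) = mk w * of y ^ e := by rw [← he, mul_mk]
    have hconj : of x * mk (w ++ [c]) * of y * (mk (w ++ [c]))⁻¹ =
        of x * mk w * of y * (mk w)⁻¹ := by
      rw [hsplit]; group
    obtain ⟨k, m, hkm⟩ := exists_mk_eq_zpow_mul_zpow_of_cyclicLength hxy w
      (hw.infix (List.prefix_append _ _).isInfix) (by rw [← h, hconj])
    exact ⟨k, m + e, by rw [hsplit, hkm, zpow_add, mul_assoc]⟩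
  push Not at hx hy
  have hlen := cyclicLength_of_mul_conj_of hxy hw hx hy
  obtain rfl : w = [] := List.eq_nil_of_length_eq_zero (by omega)
  exact ⟨0, 0, by simp [← one_eq_mk]⟩
termination_by w.length
decreasing_by all_goals subst_vars; simp

theorem exists_eq_zpow_mul_zpow_of_isConj {x y : α} (hxy : x ≠ y) {h : FreeGroup α}
    (hconj : IsConj (of x * (h * of y * h⁻¹)) (of x * of y)) :
    ∃ k m : ℤ, h = of x ^ k * of y ^ m := by
  have hxy_len : cyclicLength (of x * of y) = 2 := by
    simpa [← one_eq_mk] using cyclicLength_of_mul_conj_of hxy IsReduced.nil (by simp) (by simp)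
  rw [← mk_toWord (x := h)] at hconj ⊢
  refine exists_mk_eq_zpow_mul_zpow_of_cyclicLength hxy _ isReduced_toWord ?_
  rw [← hxy_len, ← cyclicLength_eq_of_isConj hconj]
  simp only [mul_assoc]

theorem eq_zero_of_zpow_eq_zpow_mul_zpow {a i j : α} (hi : i ≠ a) (hj : j ≠ a) {d k m : ℤ}
    (h : of a ^ d = of i ^ k * of j ^ m) : d = 0 := by
  simpa [hi, hj] using
    congrArg (lift fun z => if z = a then Multiplicative.ofAdd (1 : ℤ) else 1) h

theorem exists_zpow_conj_of_isConj {x y : α} (hxy : x ≠ y) {g u : FreeGroup α}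
    (hu : IsConj u (of y)) (hxu : IsConj (g * of x * g⁻¹ * u) (of x * of y)) :
    ∃ k : ℤ, u = (g * of x ^ k) * of y * (g * of x ^ k)⁻¹ := by
  obtain ⟨w, rfl⟩ := isConj_iff.mp hu.symm
  have hconj : IsConj (of x * (g⁻¹ * w * of y * (g⁻¹ * w)⁻¹)) (of x * of y) :=
    (isConj_iff.mpr ⟨g, by group⟩).trans hxu
  obtain ⟨k, m, hkm⟩ := exists_eq_zpow_mul_zpow_of_isConj hxy hconj
  obtain rfl : w = g * (of x ^ k * of y ^ m) := by rw [← hkm]; group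
  exact ⟨k, by group⟩

theorem eq_of_isConj_zpow_conj_mul_zpow_conj {a i j : α} (hij : i ≠ j) (hi : i ≠ a)
    (hj : j ≠ a) (g : FreeGroup α) {k l : ℤ}
    (h : IsConj ((g * of a ^ k) * of i * (g * of a ^ k)⁻¹ *
      ((g * of a ^ l) * of j * (g * of a ^ l)⁻¹)) (of i * of j)) : k = l := by
  have hconj : IsConj (of i * (of a ^ (l - k) * of j * (of a ^ (l - k))⁻¹)) (of i * of j) :=
    (isConj_iff.mpr ⟨g * of a ^ k, by group⟩).trans h
  obtain ⟨s, t, hst⟩ := exists_eq_zpow_mul_zpow_of_isConj hij hconj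
  have := eq_zero_of_zpow_eq_zpow_mul_zpow hi hj hst
  omega

end FreeGroup

open FreeGroup in
/-- If an automorphism of a finitely generated free group (with free basis `α`, of rank at
least 2) sends every element of word length at most 2 over the basis to a conjugate of
itself, then it is an inner automorphism. -/
theorem inner_of_conj_on_short_words (α : Type*) [Fintype α] [DecidableEq α]
    (hN : 2 ≤ Fintype.card α) (Φ : MulAut (FreeGroup α))
    (hconj : ∀ u : FreeGroup α, (FreeGroup.toWord u).length ≤ 2 → IsConj (Φ u) u) :
    ∃ h : FreeGroup α, ∀ x : FreeGroup α, Φ x = h * x * h⁻¹ := by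
  obtain ⟨a⟩ : Nonempty α := Fintype.card_pos_iff.mp (by omega)
  obtain ⟨i₁, hi₁⟩ := Fintype.exists_ne_of_one_lt_card hN a
  have hgen (i : α) : IsConj (Φ (of i)) (of i) := hconj _ (by simp)
  have hpair (i j : α) : IsConj (Φ (of i * of j)) (of i * of j) :=
    hconj _ ((FreeGroup.norm_mul_le _ _).trans (by simp))
  obtain ⟨g, hg⟩ := isConj_iff.mp (hgen a).symm
  have hk (j : α) (hj : j ≠ a) : ∃ k : ℤ, Φ (of j) = (g * of a ^ k) * of j * (g * of a ^ k)⁻¹ :=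
    exists_zpow_conj_of_isConj (Ne.symm hj) (hgen j) (by rw [hg, ← Φ.map_mul]; exact hpair a j)
  choose! k hk using hk
  have hk_const (j : α) (hj : j ≠ a) : k j = k i₁ := by
    by_cases hji : j = i₁
    · rw [hji]
    exact eq_of_isConj_zpow_conj_mul_zpow_conj hji hj hi₁ g
      (by rw [← hk j hj, ← hk i₁ hi₁, ← Φ.map_mul]; exact hpair j i₁)
  have hΦ : (Φ : FreeGroup α →* FreeGroup α) = MulAut.conj (g * of a ^ k i₁) := by
    refine ext_hom _ _ fun j => ?_
    by_cases hj : j = a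
    · subst hj; simp only [MonoidHom.coe_coe, MulAut.conj_apply, ← hg]; group
    · simp only [MonoidHom.coe_coe, MulAut.conj_apply, hk j hj, hk_const j hj]
  exact ⟨g * of a ^ k i₁, fun x => by
    simpa only [MonoidHom.coe_coe, MulAut.conj_apply] using DFunLike.congr_fun hΦ x⟩
end

section
/- Let F₂ = F(a,b) be the free group with basis {a,b}. For g ∈ F₂ let ‖g‖_A denote the cyclically reduced length of g with respect to the basis {a,b}, and let ‖g‖_B := ‖ψ⁻¹(g)‖_A, where ψ is the automorphism of F₂ with ψ(a) = a and ψ(b) = ab (so that ‖·‖_B is the cyclically reduced length with respect to the free basis {a, ab}). Then: (1) for every integer k and every automorphism φ of F₂, ‖φ([a,b]^k)‖_A = ‖φ([a,b]^k)‖_B = 4|k|; and (2) the functions ‖·‖_A and ‖·‖_B on F₂ are not equal (for instance ‖b‖_A = 1 while ‖b‖_B = 2). -/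
/-!
By Nielsen's theorem, every automorphism `φ` of `F₂` sends `[a,b]` to a conjugate of
`[a,b]^{±1}`. Since `(φ a, φ b)` generates `F₂`, this follows by Nielsen reduction on generating
pairs `(x, y)`: unless the pair is Nielsen reduced, an elementary Nielsen move, possibly followed
by a conjugation, makes `|x| + |y|` smaller and changes `[x,y]` only by conjugation and inversion.
In a Nielsen-reduced pair each factor of a reduced product of `x^{±1}, y^{±1}` keeps a letter that
survives all cancellation, so the letters `a` and `b` are among `x^{±1}, y^{±1}`.
The cyclically reduced length is invariant under conjugation and inversion, and `[a,b]^k` is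
cyclically reduced of length `4|k|`; the claim for `‖·‖_B` is the one for `ψ⁻¹ ∘ φ`.
-/

/-- The generator `a` of `F₂ = F(a,b)`. -/
def genA : FreeGroup (Fin 2) := FreeGroup.of 0

/-- The generator `b` of `F₂ = F(a,b)`. -/
def genB : FreeGroup (Fin 2) := FreeGroup.of 1

/-- The cyclically reduced length of an element of `F₂` with respect to the basis `{a,b}`:
the minimum of the word lengths of its conjugates. -/
noncomputable def cyclen (g : FreeGroup (Fin 2)) : ℕ :=
  sInf {n : ℕ | ∃ h : FreeGroup (Fin 2), (FreeGroup.toWord (h * g * h⁻¹)).length = n}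

/-- The endomorphism of `F₂` with `a ↦ a`, `b ↦ a b`. -/
def psiHom : FreeGroup (Fin 2) →* FreeGroup (Fin 2) :=
  FreeGroup.lift (fun i => if i = 0 then genA else genA * genB)

/-- The endomorphism of `F₂` with `a ↦ a`, `b ↦ a⁻¹ b`. -/
def psiInvHom : FreeGroup (Fin 2) →* FreeGroup (Fin 2) :=
  FreeGroup.lift (fun i => if i = 0 then genA else genA⁻¹ * genB)

lemma psiInvHom_comp_psiHom : psiInvHom.comp psiHom = MonoidHom.id (FreeGroup (Fin 2)) := by
  refine FreeGroup.ext_hom _ _ fun i => ?_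
  fin_cases i <;> simp [psiHom, psiInvHom, genA, genB]

lemma psiHom_comp_psiInvHom : psiHom.comp psiInvHom = MonoidHom.id (FreeGroup (Fin 2)) := by
  refine FreeGroup.ext_hom _ _ fun i => ?_
  fin_cases i <;> simp [psiHom, psiInvHom, genA, genB]

/-- The automorphism `ψ` of `F₂` with `ψ(a) = a`, `ψ(b) = ab`, carrying the basis `{a,b}`
to the basis `{a, ab}`. -/
def psiAut : MulAut (FreeGroup (Fin 2)) :=
  MonoidHom.toMulEquiv psiHom psiInvHom psiInvHom_comp_psiHom psiHom_comp_psiInvHom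

/-- The cyclically reduced length with respect to the free basis `{a, ab}`,
namely `‖g‖_B = ‖ψ⁻¹(g)‖_A`. -/
noncomputable def cyclenB (g : FreeGroup (Fin 2)) : ℕ := cyclen (psiAut.symm g)

open scoped commutatorElement

section Group

variable {G : Type*} [Group G]

theorem IsConj.zpow {g h : G} (hc : IsConj g h) (k : ℤ) : IsConj (g ^ k) (h ^ k) := by
  obtain ⟨c, rfl⟩ := isConj_iff.1 hc
  exact isConj_iff.2 ⟨c, conj_zpow.symm⟩

theorem IsConj.inv {g h : G} (hc : IsConj g h) : IsConj g⁻¹ h⁻¹ := by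
  simpa using hc.zpow (-1)

def IsConjOrInv (g h : G) : Prop := IsConj g h ∨ IsConj g h⁻¹

theorem IsConjOrInv.symm {g h : G} : IsConjOrInv g h → IsConjOrInv h g
  | .inl hc => .inl hc.symm
  | .inr hc => .inr (by simpa using hc.inv.symm)

theorem IsConjOrInv.trans {g h k : G} : IsConjOrInv g h → IsConjOrInv h k → IsConjOrInv g k
  | .inl h₁, .inl h₂ => .inl (h₁.trans h₂)
  | .inl h₁, .inr h₂ => .inr (h₁.trans h₂)
  | .inr h₁, .inl h₂ => .inr (h₁.trans h₂.inv)
  | .inr h₁, .inr h₂ => .inl (h₁.trans (by simpa using h₂.inv))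

def IsPairVariant (x y u v : G) : Prop :=
  ((u = x ∨ u = x⁻¹) ∧ (v = y ∨ v = y⁻¹)) ∨ ((u = y ∨ u = y⁻¹) ∧ (v = x ∨ v = x⁻¹))

namespace IsPairVariant

variable {x y u v : G}

theorem inv (h : IsPairVariant x y u v) : IsPairVariant x y u⁻¹ v⁻¹ := by
  unfold IsPairVariant at *
  rcases h with ⟨rfl | rfl, rfl | rfl⟩ | ⟨rfl | rfl, rfl | rfl⟩ <;> simp

theorem inv_swap (h : IsPairVariant x y u v) : IsPairVariant x y v⁻¹ u⁻¹ := by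
  unfold IsPairVariant at *
  rcases h with ⟨rfl | rfl, rfl | rfl⟩ | ⟨rfl | rfl, rfl | rfl⟩ <;> simp

theorem isConjOrInv_commutator (h : IsPairVariant x y u v) : IsConjOrInv ⁅u, v⁆ ⁅x, y⁆ := by
  unfold IsConjOrInv
  simp only [isConj_iff, commutatorElement_def]
  rcases h with ⟨rfl | rfl, rfl | rfl⟩ | ⟨rfl | rfl, rfl | rfl⟩
  · exact .inl ⟨1, by group⟩
  · exact .inr ⟨y, by group⟩
  · exact .inr ⟨x, by group⟩
  · exact .inl ⟨y * x, by group⟩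
  · exact .inr ⟨1, by group⟩
  · exact .inl ⟨x, by group⟩
  · exact .inl ⟨y, by group⟩
  · exact .inr ⟨x * y, by group⟩

theorem right_ne_one (h : IsPairVariant x y u v) (hx : x ≠ 1) (hy : y ≠ 1) : v ≠ 1 := by
  rcases h with ⟨-, rfl | rfl⟩ | ⟨-, rfl | rfl⟩ <;> simpa

end IsPairVariant

theorem isPairVariant_of_eq {x y u v : G} (hu : u = x ∨ u = x⁻¹ ∨ u = y ∨ u = y⁻¹)
    (hv : v = x ∨ v = x⁻¹ ∨ v = y ∨ v = y⁻¹) (h₁ : v ≠ u) (h₂ : v ≠ u⁻¹) :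
    IsPairVariant x y u v := by
  unfold IsPairVariant
  rcases hu with rfl | rfl | rfl | rfl <;> rcases hv with rfl | rfl | rfl | rfl <;> simp_all

theorem mem_closure_pair_left (x y : G) : x ∈ Subgroup.closure {x, y} :=
  Subgroup.subset_closure (Set.mem_insert x _)

theorem mem_closure_pair_right (x y : G) : y ∈ Subgroup.closure {x, y} :=
  Subgroup.subset_closure (Set.mem_insert_of_mem x rfl)

theorem closure_pair_eq_top_of_mem {x y u v : G} (hxy : Subgroup.closure {x, y} = ⊤)
    (hx : x ∈ Subgroup.closure {u, v}) (hy : y ∈ Subgroup.closure {u, v}) :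
    Subgroup.closure {u, v} = ⊤ :=
  eq_top_iff.2 <| hxy ▸ (Subgroup.closure_le _).2 <|
    Set.insert_subset_iff.2 ⟨hx, Set.singleton_subset_iff.2 hy⟩

theorem IsPairVariant.closure_eq_top {x y u v : G} (h : IsPairVariant x y u v)
    (hxy : Subgroup.closure {x, y} = ⊤) : Subgroup.closure {u, v} = ⊤ := by
  have hu := mem_closure_pair_left u v
  have hv := mem_closure_pair_right u v
  refine closure_pair_eq_top_of_mem hxy ?_ ?_ <;>
  rcases h with ⟨rfl | rfl, rfl | rfl⟩ | ⟨rfl | rfl, rfl | rfl⟩ <;>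
  first | assumption | simpa using inv_mem hu | simpa using inv_mem hv

theorem closure_pair_map_eq_top {x y : G} (φ : G ≃* G) (hxy : Subgroup.closure {x, y} = ⊤) :
    Subgroup.closure {φ x, φ y} = ⊤ := by
  rw [← Set.image_pair, show (φ '' {x, y}) = φ.toMonoidHom '' {x, y} from rfl,
    ← MonoidHom.map_closure, hxy]
  exact Subgroup.map_top_of_surjective _ φ.surjective

/-- The image of the letter `p` under `FreeGroup.lift ![x, y]`. -/
def pairLetter (x y : G) (p : Fin 2 × Bool) : G :=
  bif p.2 then ![x, y] p.1 else (![x, y] p.1)⁻¹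

theorem isPairVariant_pairLetter (x y : G) {p q : Fin 2 × Bool} (h : p.1 ≠ q.1) :
    IsPairVariant x y (pairLetter x y p) (pairLetter x y q) := by
  obtain ⟨i, s⟩ := p
  obtain ⟨j, t⟩ := q
  fin_cases i <;> fin_cases j <;> cases s <;> cases t <;> simp_all [IsPairVariant, pairLetter]

theorem pairLetter_eq_inv {x y : G} {p q : Fin 2 × Bool} (h₁ : p.1 = q.1)
    (h₂ : p.2 ≠ q.2) : pairLetter x y q = (pairLetter x y p)⁻¹ := by
  obtain ⟨i, s⟩ := p
  obtain ⟨j, t⟩ := q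
  obtain rfl : i = j := h₁
  cases s <;> cases t <;> simp_all [pairLetter]

end Group

namespace FreeGroup

variable {α : Type*}

theorem eq_nil_of_isReduced_append_invRev {w : List (α × Bool)}
    (h : IsReduced (w ++ invRev w)) : w = [] := by
  induction w using List.reverseRecOn with
  | nil => rfl
  | append_singleton w s _ =>
    have hs : IsReduced [s, (s.1, !s.2)] :=
      h.infix ⟨w, invRev w, by simp [invRev]⟩
    simp [isReduced_cons_cons] at hs

theorem mk_append_mul_mk_invRev_append (u w v : List (α × Bool)) :
    mk (u ++ w) * mk (invRev w ++ v) = mk (u ++ v) := by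
  simp only [← mul_mk, ← inv_mk]
  group

theorem exists_eq_append_invRev_append_of_isReduced {L₁ L₂ : List (α × Bool)}
    (h₁ : IsReduced L₁) (h₂ : IsReduced L₂) :
    ∃ u w v, L₁ = u ++ w ∧ L₂ = invRev w ++ v ∧ IsReduced (u ++ v) := by
  induction L₁ using List.reverseRecOn generalizing L₂ with
  | nil => exact ⟨[], [], L₂, rfl, by simp [invRev], h₂⟩
  | append_singleton L s ih =>
    rcases L₂ with - | ⟨t, L₂⟩
    · exact ⟨L ++ [s], [], [], by simp, by simp [invRev], by simpa using h₁⟩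
    by_cases hst : t = (s.1, !s.2)
    · obtain ⟨u, w, v, rfl, rfl, h⟩ :=
        ih (h₁.infix ⟨[], [s], rfl⟩) (h₂.infix ⟨[t], [], by simp⟩ : IsReduced L₂)
      exact ⟨u, w ++ [s], v, by simp, by simp [invRev, hst], h⟩
    · refine ⟨L ++ [s], [], t :: L₂, by simp, by simp [invRev], ?_⟩
      refine IsReduced.append_overlap h₁ ?_ (List.cons_ne_nil s [])
      refine isReduced_cons_cons.2 ⟨fun h1 => ?_, h₂⟩
      by_contra h2
      exact hst (Prod.ext h1.symm (Bool.eq_not_iff.2 (Ne.symm h2)))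

variable [DecidableEq α]

def cancelLength (x y : FreeGroup α) : ℕ := (norm x + norm y - norm (x * y)) / 2

theorem toWord_mk_of_isReduced {L : List (α × Bool)} (h : IsReduced L) : (mk L).toWord = L := by
  rw [toWord_mk, h.reduce_eq]

theorem exists_toWord_mul (x y : FreeGroup α) :
    ∃ u w v, x.toWord = u ++ w ∧ y.toWord = invRev w ++ v ∧ (x * y).toWord = u ++ v ∧
      w.length = cancelLength x y := by
  obtain ⟨u, w, v, hx, hy, h⟩ :=
    exists_eq_append_invRev_append_of_isReduced (isReduced_toWord (x := x))
      (isReduced_toWord (x := y))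
  have hxy : (x * y).toWord = u ++ v := by
    rw [← mk_toWord (x := x), ← mk_toWord (x := y), hx, hy, mk_append_mul_mk_invRev_append,
      toWord_mk_of_isReduced h]
  refine ⟨u, w, v, hx, hy, hxy, ?_⟩
  simp only [cancelLength, norm, hx, hy, hxy, List.length_append, invRev_length]
  omega

theorem norm_mul_add_two_mul_cancelLength (x y : FreeGroup α) :
    norm (x * y) + 2 * cancelLength x y = norm x + norm y := by
  obtain ⟨u, w, v, hx, hy, hxy, hw⟩ := exists_toWord_mul x y
  simp only [norm, hx, hy, hxy, List.length_append, invRev_length, ← hw]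
  omega

theorem norm_lt_norm_mul_self {x : FreeGroup α} (hx : x ≠ 1) : norm x < norm (x * x) := by
  open reduceCyclically in
  have hL := conj_conjugator_reduceCyclically x.toWord
  have hxx : (x * x).toWord = conjugator x.toWord ++
      (reduceCyclically x.toWord ++ reduceCyclically x.toWord) ++
        invRev (conjugator x.toWord) := by
    rw [← pow_two, toWord_pow, reduce_flatten_replicate isReduced_toWord]
    simp
  have hR : reduceCyclically x.toWord ≠ [] := by
    intro hR
    rw [hR, List.append_nil] at hL
    have hC := eq_nil_of_isReduced_append_invRev (hL ▸ isReduced_toWord (x := x))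
    rw [hC] at hL
    exact hx (toWord_eq_nil_iff.1 (by simpa [invRev] using hL.symm))
  have hlen := congrArg List.length hL
  simp only [List.length_append, invRev_length] at hlen
  simp only [norm, hxx, List.length_append, invRev_length, ← hlen]
  have := List.length_pos_iff.2 hR
  omega

theorem two_mul_cancelLength_self_lt {x : FreeGroup α} (hx : x ≠ 1) :
    2 * cancelLength x x < norm x := by
  have := norm_mul_add_two_mul_cancelLength x x
  have := norm_lt_norm_mul_self hx
  omega

theorem cancelLength_add_cancelLength_inv_lt {u v : FreeGroup α} (hv : v ≠ 1)
    (h₁ : 2 * cancelLength u v ≤ norm v) (h₂ : 2 * cancelLength v u⁻¹ ≤ norm v) :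
    cancelLength u v + cancelLength v u⁻¹ < norm v := by
  by_contra! h
  obtain ⟨U, w, V, hu, hv₁, -, hw⟩ := exists_toWord_mul u v
  obtain ⟨V', w', U', hv₂, hu', -, hw'⟩ := exists_toWord_mul v u⁻¹
  have hl₁ : norm v = w.length + V.length := by simp [norm, hv₁, invRev_length]
  have hl₂ : norm v = V'.length + w'.length := by simp [norm, hv₂]
  have hww' : w = w' := by
    rw [toWord_inv, hu, invRev_append] at hu'
    exact invRev_injective (List.append_inj hu' (by simp only [invRev_length]; omega)).1
  subst hww'
  have hVw : V = w := (List.append_inj (hv₁.symm.trans hv₂) (by rw [invRev_length]; omega)).2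
  subst hVw
  have hred : IsReduced (invRev V ++ invRev (invRev V)) := by
    rw [invRev_invRev, ← hv₁]
    exact isReduced_toWord
  have hV : V = [] := by simpa [invRev] using eq_nil_of_isReduced_append_invRev hred
  exact hv (toWord_eq_nil_iff.1 (by simp [hv₁, hV, invRev]))

/-- Writing `u = v₁⁻¹ y w` and `v = w⁻¹ v₁` as reduced words, conjugation by `w` sends `v` to
`v₁ w⁻¹` and `v * u` to `y`. -/
theorem exists_norm_conj_add_norm_conj_mul_le {u v : FreeGroup α}
    (h₁ : 2 * cancelLength u v ≤ norm u) (h₂ : 2 * cancelLength u v ≤ norm v)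
    (h₃ : 2 * cancelLength v u ≤ norm v) (h : norm v ≤ cancelLength u v + cancelLength v u) :
    ∃ g, norm (g * v * g⁻¹) + norm (g * (v * u) * g⁻¹) ≤ norm u := by
  obtain ⟨U, w, V, hu, hv, -, hw⟩ := exists_toWord_mul u v
  obtain ⟨V', w', U', hv', hu', -, hw'⟩ := exists_toWord_mul v u
  have hlu : norm u = U.length + w.length := by simp [norm, hu]
  have hlv : norm v = w.length + V.length := by simp [norm, hv, invRev_length]
  have hlv' : norm v = V'.length + w'.length := by simp [norm, hv']
  have hVw' : V = w' := (List.append_inj (hv.symm.trans hv') (by rw [invRev_length]; omega)).2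
  subst hVw'
  obtain ⟨Y, hU⟩ : ∃ Y, U = invRev V ++ Y := by
    have htake := congrArg (List.take w.length) (hu.symm.trans hu')
    rw [List.take_append_of_le_length (by omega),
      List.take_left' (by rw [invRev_length]; omega)] at htake
    exact ⟨U.drop w.length, by rw [← htake, List.take_append_drop]⟩
  have hconj : mk w * v * (mk w)⁻¹ = mk (V ++ invRev w) := by
    rw [← mk_toWord (x := v), hv]
    simp only [← mul_mk, ← inv_mk]
    group
  have hconj_mul : mk w * (v * u) * (mk w)⁻¹ = mk Y := by
    rw [← mk_toWord (x := v), ← mk_toWord (x := u), hv, hu, hU]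
    simp only [← mul_mk, ← inv_mk]
    group
  refine ⟨mk w, ?_⟩
  rw [hconj, hconj_mul]
  refine le_trans (add_le_add norm_mk_le norm_mk_le) ?_
  simp only [hU, List.length_append, invRev_length] at hlu ⊢
  omega

section Counting

variable {β : Type*} {R : β → β → Prop} (z : β → FreeGroup α)

/-- Multiplying out from the left, the reduced word of the partial product always ends with a
nonempty remainder `(z p).toWord.drop c` of its last factor `z p`, which is long enough to absorb
the cancellation with the next factor. -/
theorem length_add_le_norm_mk_mul_prod_map
    (hpair : ∀ p q, R p q → cancelLength (z p) (z q) < norm (z q))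
    (htriple : ∀ p q r, R p q → R q r →
      cancelLength (z p) (z q) + cancelLength (z q) (z r) < norm (z q))
    (T : List β) (p : β) (A : List (α × Bool)) (c : ℕ) (hchain : (p :: T).IsChain R)
    (hc : c < norm (z p)) (hnext : ∀ q ∈ T.head?, c + cancelLength (z p) (z q) < norm (z p))
    (hA : IsReduced (A ++ (z p).toWord.drop c)) :
    A.length + 1 + T.length ≤ norm (mk (A ++ (z p).toWord.drop c) * (T.map z).prod) := by
  induction T generalizing p A c with
  | nil =>
    rw [List.map_nil, List.prod_nil, mul_one, norm, toWord_mk_of_isReduced hA]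
    simp only [List.length_append, List.length_drop, List.length_nil]
    unfold norm at hc
    omega
  | cons q T ih =>
    obtain ⟨hpq, hchain⟩ := List.isChain_cons_cons.1 hchain
    obtain ⟨P, w, Q, hp, hq, hpq', hw⟩ := exists_toWord_mul (z p) (z q)
    have hcP : c < P.length := by
      have := hnext q rfl
      simp only [norm, hp, List.length_append] at this
      omega
    have hdrop : (z p).toWord.drop c = P.drop c ++ w := by
      rw [hp, List.drop_append_of_le_length hcP.le]
    have hQ : (z q).toWord.drop w.length = Q := by
      rw [hq, List.drop_left' invRev_length]
    have hPne : P.drop c ≠ [] := by simpa using hcP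
    have hred : IsReduced (A ++ P.drop c ++ (z q).toWord.drop w.length) := by
      rw [hQ]
      refine IsReduced.append_overlap ?_ ?_ hPne
      · exact hA.infix ⟨[], w, by rw [hdrop]; simp⟩
      · exact (hpq' ▸ isReduced_toWord).infix ⟨P.take c, [], by simp [← List.append_assoc]⟩
    have hstep : mk (A ++ (z p).toWord.drop c) * z q =
        mk (A ++ P.drop c ++ (z q).toWord.drop w.length) := by
      rw [hdrop, hQ, ← mk_toWord (x := z q), hq, ← List.append_assoc,
        mk_append_mul_mk_invRev_append]
    have := ih q (A ++ P.drop c) w.length hchain (hw ▸ hpair p q hpq)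
      (fun r hr => hw ▸ htriple p q r hpq (hchain.rel_head? hr)) hred
    rw [List.map_cons, List.prod_cons, ← mul_assoc, hstep]
    refine le_trans ?_ this
    have := List.length_pos_iff.2 hPne
    simp only [List.length_append, List.length_cons]
    omega

theorem length_le_norm_prod_map (hz : ∀ p, z p ≠ 1)
    (hpair : ∀ p q, R p q →
      cancelLength (z p) (z q) < norm (z p) ∧ cancelLength (z p) (z q) < norm (z q))
    (htriple : ∀ p q r, R p q → R q r →
      cancelLength (z p) (z q) + cancelLength (z q) (z r) < norm (z q))
    {L : List β} (hL : L.IsChain R) : L.length ≤ norm (L.map z).prod := by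
  rcases L with - | ⟨p, T⟩
  · simp
  have := length_add_le_norm_mk_mul_prod_map z (fun p q h => (hpair p q h).2) htriple T p [] 0
    hL (Nat.pos_of_ne_zero (mt norm_eq_zero.1 (hz p)))
    (fun q hq => by simpa using (hpair p q (hL.rel_head? hq)).1)
    (by simpa using isReduced_toWord)
  simp only [List.length_nil, List.nil_append, List.drop_zero, mk_toWord] at this
  simpa [add_comm] using this

end Counting

theorem _root_.IsPairVariant.norm_add_norm {x y u v : FreeGroup α} (h : IsPairVariant x y u v) :
    norm u + norm v = norm x + norm y := by
  rcases h with ⟨rfl | rfl, rfl | rfl⟩ | ⟨rfl | rfl, rfl | rfl⟩ <;> simp [norm_inv_eq, add_comm]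

/-- The second condition says that `v` is not cancelled completely in `u * v * u`. -/
def NielsenReduced (x y : FreeGroup α) : Prop :=
  ∀ u v, IsPairVariant x y u v →
    norm u ≤ norm (u * v) ∧ cancelLength u v + cancelLength v u < norm v

namespace NielsenReduced

variable {x y : FreeGroup α}

theorem left_ne_one (h : NielsenReduced x y) : x ≠ 1 := by
  have := (h y x (.inr ⟨.inl rfl, .inl rfl⟩)).2
  rintro rfl
  simp at this

theorem right_ne_one (h : NielsenReduced x y) : y ≠ 1 := by
  have := (h x y (.inl ⟨.inl rfl, .inl rfl⟩)).2
  rintro rfl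
  simp at this

theorem two_mul_cancelLength_le (h : NielsenReduced x y) {u v : FreeGroup α}
    (huv : IsPairVariant x y u v) :
    2 * cancelLength u v ≤ norm u ∧ 2 * cancelLength u v ≤ norm v := by
  have h₁ := (h u v huv).1
  have h₂ := (h v⁻¹ u⁻¹ huv.inv_swap).1
  rw [← mul_inv_rev, norm_inv_eq, norm_inv_eq] at h₂
  have := norm_mul_add_two_mul_cancelLength u v
  omega

theorem pairLetter_ne_one (h : NielsenReduced x y) (p : Fin 2 × Bool) :
    pairLetter x y p ≠ 1 := by
  obtain ⟨i, s⟩ := p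
  fin_cases i <;> cases s <;> simp [pairLetter, h.left_ne_one, h.right_ne_one]

theorem two_mul_cancelLength_pairLetter_le (h : NielsenReduced x y) {p q : Fin 2 × Bool}
    (hpq : p.1 = q.1 → p.2 = q.2) :
    2 * cancelLength (pairLetter x y p) (pairLetter x y q) ≤ norm (pairLetter x y p) ∧
      2 * cancelLength (pairLetter x y p) (pairLetter x y q) ≤ norm (pairLetter x y q) := by
  by_cases h₁ : p.1 = q.1
  · obtain rfl : p = q := Prod.ext h₁ (hpq h₁)
    have := two_mul_cancelLength_self_lt (h.pairLetter_ne_one p)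
    omega
  · exact h.two_mul_cancelLength_le (isPairVariant_pairLetter x y h₁)

theorem cancelLength_pairLetter_lt (h : NielsenReduced x y) {p q : Fin 2 × Bool}
    (hpq : p.1 = q.1 → p.2 = q.2) :
    cancelLength (pairLetter x y p) (pairLetter x y q) < norm (pairLetter x y p) ∧
      cancelLength (pairLetter x y p) (pairLetter x y q) < norm (pairLetter x y q) := by
  have := h.two_mul_cancelLength_pairLetter_le hpq
  have hp := Nat.pos_of_ne_zero (mt norm_eq_zero.1 (h.pairLetter_ne_one p))
  have hq := Nat.pos_of_ne_zero (mt norm_eq_zero.1 (h.pairLetter_ne_one q))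
  omega

theorem cancelLength_pairLetter_add_lt (h : NielsenReduced x y) {p q r : Fin 2 × Bool}
    (hpq : p.1 = q.1 → p.2 = q.2) (hqr : q.1 = r.1 → q.2 = r.2) :
    cancelLength (pairLetter x y p) (pairLetter x y q) +
      cancelLength (pairLetter x y q) (pairLetter x y r) < norm (pairLetter x y q) := by
  have hpq' := h.two_mul_cancelLength_pairLetter_le hpq
  have hqr' := h.two_mul_cancelLength_pairLetter_le hqr
  by_cases h₁ : p.1 = q.1
  · obtain rfl : p = q := Prod.ext h₁ (hpq h₁)
    have := two_mul_cancelLength_self_lt (h.pairLetter_ne_one p)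
    omega
  by_cases h₂ : q.1 = r.1
  · obtain rfl : q = r := Prod.ext h₂ (hqr h₂)
    have := two_mul_cancelLength_self_lt (h.pairLetter_ne_one q)
    omega
  have h₃ : p.1 = r.1 := by omega
  by_cases h₄ : p.2 = r.2
  · obtain rfl : p = r := Prod.ext h₃ h₄
    exact (h _ _ (isPairVariant_pairLetter x y h₁)).2
  · rw [pairLetter_eq_inv h₃ h₄] at hqr' ⊢
    exact cancelLength_add_cancelLength_inv_lt (h.pairLetter_ne_one q) hpq'.2 hqr'.1

theorem eq_of_mem_closure_of_norm_eq_one (h : NielsenReduced x y) {g : FreeGroup α}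
    (hg : g ∈ Subgroup.closure {x, y}) (hg₁ : norm g = 1) : g = x ∨ g = x⁻¹ ∨ g = y ∨ g = y⁻¹ := by
  rw [← Matrix.range_cons_cons_empty x y ![], ← range_lift_eq_closure] at hg
  obtain ⟨g', rfl⟩ := hg
  have hg' : lift ![x, y] g' = (g'.toWord.map (pairLetter x y)).prod := by
    conv_lhs => rw [← mk_toWord (x := g')]
    rw [lift_mk]
    rfl
  have hlen := length_le_norm_prod_map (pairLetter x y) h.pairLetter_ne_one
    (fun _ _ => h.cancelLength_pairLetter_lt)
    (fun _ _ _ => h.cancelLength_pairLetter_add_lt) (isReduced_toWord (x := g'))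
  rw [← hg', hg₁] at hlen
  rcases hw : g'.toWord with - | ⟨⟨i, s⟩, _ | _⟩
  · rw [← mk_toWord (x := g'), hw] at hg₁
    simp at hg₁
  · rw [hg', hw]
    fin_cases i <;> cases s <;> simp [pairLetter]
  · rw [hw] at hlen
    simp at hlen

end NielsenReduced

theorem exists_shorter_of_norm_mul_lt {x y u v : FreeGroup α}
    (hxy : Subgroup.closure {x, y} = ⊤) (huv : IsPairVariant x y u v)
    (hlt : norm (u * v) < norm u) :
    ∃ x' y', Subgroup.closure {x', y'} = ⊤ ∧ norm x' + norm y' < norm x + norm y ∧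
      IsConjOrInv ⁅x', y'⁆ ⁅x, y⁆ := by
  have hcl := huv.closure_eq_top hxy
  refine ⟨u * v, v, closure_pair_eq_top_of_mem hcl ?_ (mem_closure_pair_right _ _), ?_, ?_⟩
  · simpa using
      mul_mem (mem_closure_pair_left (u * v) v) (inv_mem (mem_closure_pair_right _ _))
  · have := huv.norm_add_norm
    omega
  · rw [show ⁅u * v, v⁆ = ⁅u, v⁆ by simp only [commutatorElement_def]; group]
    exact huv.isConjOrInv_commutator

theorem exists_shorter_of_not_nielsenReduced {x y : FreeGroup α} (hx : x ≠ 1) (hy : y ≠ 1)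
    (hxy : Subgroup.closure {x, y} = ⊤) (h : ¬ NielsenReduced x y) :
    ∃ x' y', Subgroup.closure {x', y'} = ⊤ ∧ norm x' + norm y' < norm x + norm y ∧
      IsConjOrInv ⁅x', y'⁆ ⁅x, y⁆ := by
  by_cases hN : ∀ u v, IsPairVariant x y u v → norm u ≤ norm (u * v)
  swap
  · push Not at hN
    obtain ⟨u, v, huv, hlt⟩ := hN
    exact exists_shorter_of_norm_mul_lt hxy huv hlt
  simp only [NielsenReduced, not_forall, not_and_or, not_le, not_lt] at h
  obtain ⟨u, v, huv, hbad⟩ := h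
  have hv : v ≠ 1 := huv.right_ne_one hx hy
  have hcancel : norm v ≤ cancelLength u v + cancelLength v u :=
    hbad.resolve_left (not_lt.2 (hN u v huv))
  have h₁ := hN u v huv
  have h₂ := hN v⁻¹ u⁻¹ huv.inv_swap
  have h₃ := hN u⁻¹ v⁻¹ huv.inv
  rw [← mul_inv_rev, norm_inv_eq, norm_inv_eq] at h₂ h₃
  have := norm_mul_add_two_mul_cancelLength u v
  have := norm_mul_add_two_mul_cancelLength v u
  obtain ⟨g, hg⟩ := exists_norm_conj_add_norm_conj_mul_le (u := u) (v := v) (by omega) (by omega)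
    (by omega) hcancel
  have hcl : Subgroup.closure {v, v * u} = ⊤ := by
    refine closure_pair_eq_top_of_mem (huv.closure_eq_top hxy) ?_ (mem_closure_pair_left _ _)
    simpa using mul_mem (inv_mem (mem_closure_pair_left v (v * u))) (mem_closure_pair_right _ _)
  refine ⟨g * v * g⁻¹, g * (v * u) * g⁻¹, closure_pair_map_eq_top (MulAut.conj g) hcl, ?_, ?_⟩
  · have := huv.norm_add_norm
    have := Nat.pos_of_ne_zero (mt norm_eq_zero.1 hv)
    omega
  · refine IsConjOrInv.trans (.inr (isConj_iff.2 ⟨(g * v)⁻¹, ?_⟩)) huv.isConjOrInv_commutator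
    simp only [commutatorElement_def]
    group

theorem norm_pow_le (x : FreeGroup α) (n : ℕ) : norm (x ^ n) ≤ n * norm x := by
  induction n with
  | zero => simp [norm_one]
  | succ n ih =>
    rw [pow_succ, add_one_mul]
    exact (norm_mul_le _ _).trans (by omega)

theorem toWord_pow_of_isCyclicallyReduced {x : FreeGroup α} (hx : IsCyclicallyReduced x.toWord)
    (n : ℕ) : (x ^ n).toWord = (List.replicate n x.toWord).flatten := by
  rw [toWord_pow, (hx.flatten_replicate n).isReduced.reduce_eq]

theorem isCyclicallyReduced_toWord_pow {x : FreeGroup α} (hx : IsCyclicallyReduced x.toWord)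
    (n : ℕ) : IsCyclicallyReduced (x ^ n).toWord := by
  rw [toWord_pow_of_isCyclicallyReduced hx]
  exact hx.flatten_replicate n

theorem norm_pow_of_isCyclicallyReduced {x : FreeGroup α} (hx : IsCyclicallyReduced x.toWord)
    (n : ℕ) : norm (x ^ n) = n * norm x := by
  simp [norm, toWord_pow_of_isCyclicallyReduced hx]

/-- Compare the lengths of `x ^ n` and `(k * x * k⁻¹) ^ n` for large `n`. -/
theorem norm_le_norm_conj_of_isCyclicallyReduced {x : FreeGroup α}
    (hx : IsCyclicallyReduced x.toWord) (k : FreeGroup α) : norm x ≤ norm (k * x * k⁻¹) := by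
  have key (n : ℕ) : n * norm x ≤ 2 * norm k + n * norm (k * x * k⁻¹) := by
    calc n * norm x = norm (k⁻¹ * (k * x * k⁻¹) ^ n * k) := by
          rw [conj_pow, ← norm_pow_of_isCyclicallyReduced hx]
          group
      _ ≤ norm k⁻¹ + norm ((k * x * k⁻¹) ^ n) + norm k :=
          (norm_mul_le _ _).trans (Nat.add_le_add_right (norm_mul_le _ _) _)
      _ ≤ 2 * norm k + n * norm (k * x * k⁻¹) := by
          have := norm_pow_le (k * x * k⁻¹) n
          rw [norm_inv_eq]
          omega
  by_contra! hlt
  have := key (2 * norm k + 1)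
  nlinarith

end FreeGroup

open FreeGroup

theorem ne_one_of_closure_pair_eq_top {x y : FreeGroup (Fin 2)}
    (h : Subgroup.closure {x, y} = ⊤) : x ≠ 1 := by
  rintro rfl
  rw [Subgroup.closure_insert_one, ← Subgroup.zpowers_eq_closure] at h
  obtain ⟨m, hm⟩ := Subgroup.mem_zpowers_iff.1 (h ▸ Subgroup.mem_top genA)
  obtain ⟨n, hn⟩ := Subgroup.mem_zpowers_iff.1 (h ▸ Subgroup.mem_top genB)
  exact (by decide : genA * genB ≠ genB * genA)
    (by rw [← hm, ← hn, ← zpow_add, ← zpow_add, add_comm])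

theorem isConjOrInv_commutator_of_nielsenReduced {x y : FreeGroup (Fin 2)}
    (h : NielsenReduced x y) (hxy : Subgroup.closure {x, y} = ⊤) :
    IsConjOrInv ⁅x, y⁆ ⁅genA, genB⁆ := by
  have ha := h.eq_of_mem_closure_of_norm_eq_one (hxy ▸ Subgroup.mem_top genA) rfl
  have hb := h.eq_of_mem_closure_of_norm_eq_one (hxy ▸ Subgroup.mem_top genB) rfl
  exact (isPairVariant_of_eq ha hb (by decide) (by decide)).isConjOrInv_commutator.symm

theorem isConjOrInv_commutator_of_closure_eq_top (x y : FreeGroup (Fin 2))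
    (h : Subgroup.closure {x, y} = ⊤) : IsConjOrInv ⁅x, y⁆ ⁅genA, genB⁆ := by
  induction hn : norm x + norm y using Nat.strong_induction_on generalizing x y with
  | _ n ih =>
    by_cases hred : NielsenReduced x y
    · exact isConjOrInv_commutator_of_nielsenReduced hred h
    have hx := ne_one_of_closure_pair_eq_top h
    have hy := ne_one_of_closure_pair_eq_top (Set.pair_comm x y ▸ h)
    obtain ⟨x', y', h', hlt, hc⟩ := exists_shorter_of_not_nielsenReduced hx hy h hred
    exact hc.symm.trans (ih _ (hn ▸ hlt) x' y' h' rfl)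

theorem cyclen_conj (g k : FreeGroup (Fin 2)) : cyclen (k * g * k⁻¹) = cyclen g := by
  unfold cyclen
  congr 1
  ext n
  constructor
  · rintro ⟨h, rfl⟩
    exact ⟨h * k, by group⟩
  · rintro ⟨h, rfl⟩
    exact ⟨h * k⁻¹, by group⟩

theorem cyclen_inv (g : FreeGroup (Fin 2)) : cyclen g⁻¹ = cyclen g := by
  unfold cyclen
  congr 1
  ext n
  have (h : FreeGroup (Fin 2)) : h * g⁻¹ * h⁻¹ = (h * g * h⁻¹)⁻¹ := by group
  simp only [this, toWord_inv, invRev_length]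

theorem IsConj.cyclen_eq {g g' : FreeGroup (Fin 2)} (h : IsConj g g') : cyclen g = cyclen g' := by
  obtain ⟨k, rfl⟩ := isConj_iff.1 h
  exact (cyclen_conj g k).symm

theorem IsConjOrInv.cyclen_zpow_eq {g g' : FreeGroup (Fin 2)} (h : IsConjOrInv g g') (k : ℤ) :
    cyclen (g ^ k) = cyclen (g' ^ k) := by
  rcases h with h | h
  · exact (h.zpow k).cyclen_eq
  · rw [(h.zpow k).cyclen_eq, inv_zpow, cyclen_inv]

theorem cyclen_eq_norm {g : FreeGroup (Fin 2)} (hg : IsCyclicallyReduced g.toWord) :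
    cyclen g = g.norm := by
  refine le_antisymm (Nat.sInf_le ⟨1, by simp [FreeGroup.norm]⟩) (le_csInf ⟨_, 1, rfl⟩ ?_)
  rintro n ⟨k, rfl⟩
  exact norm_le_norm_conj_of_isCyclicallyReduced hg k

theorem cyclen_zpow_of_isCyclicallyReduced {g : FreeGroup (Fin 2)}
    (hg : IsCyclicallyReduced g.toWord) (k : ℤ) : cyclen (g ^ k) = k.natAbs * g.norm := by
  have hpow (n : ℕ) : cyclen (g ^ n) = n * g.norm := by
    rw [cyclen_eq_norm (isCyclicallyReduced_toWord_pow hg n), norm_pow_of_isCyclicallyReduced hg]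
  rcases k with n | n
  · simpa using hpow n
  · rw [zpow_negSucc, cyclen_inv, hpow]
    rfl

theorem closure_genA_genB : Subgroup.closure {genA, genB} = ⊤ := by
  rw [← closure_range_of, ← Matrix.range_cons_cons_empty genA genB ![]]
  congr 2
  ext i
  fin_cases i <;> rfl

theorem cyclen_map_commutator_zpow (φ : MulAut (FreeGroup (Fin 2))) (k : ℤ) :
    cyclen (φ (⁅genA, genB⁆ ^ k)) = 4 * k.natAbs := by
  have hφ := closure_pair_map_eq_top φ closure_genA_genB
  have hcomm : IsCyclicallyReduced ⁅genA, genB⁆.toWord := by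
    unfold IsCyclicallyReduced FreeGroup.IsReduced
    decide
  rw [map_zpow, map_commutatorElement,
    (isConjOrInv_commutator_of_closure_eq_top _ _ hφ).cyclen_zpow_eq,
    cyclen_zpow_of_isCyclicallyReduced hcomm, mul_comm]
  rfl

/-- (1) For every integer `k` and every automorphism `φ` of `F₂`, the element
`φ([a,b]^k)` has cyclically reduced length `4|k|` with respect to both bases `{a,b}` and
`{a, ab}`; (2) nonetheless the two length functions differ, e.g. on `b`. -/
theorem commutator_orbit_lengths :
    (∀ (k : ℤ) (φ : MulAut (FreeGroup (Fin 2))),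
      cyclen (φ (⁅genA, genB⁆ ^ k)) = 4 * k.natAbs ∧
      cyclenB (φ (⁅genA, genB⁆ ^ k)) = 4 * k.natAbs) ∧
    cyclen genB = 1 ∧ cyclenB genB = 2 ∧ cyclen ≠ cyclenB := by
  have hA : cyclen genB = 1 := cyclen_eq_norm (by simp [genB, toWord_of])
  have hB : cyclenB genB = 2 := by
    have hψ : psiAut.symm genB = genA⁻¹ * genB := rfl
    have hred : IsCyclicallyReduced (genA⁻¹ * genB).toWord := by
      unfold IsCyclicallyReduced FreeGroup.IsReduced
      decide
    rw [cyclenB, hψ, cyclen_eq_norm hred]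
    rfl
  refine ⟨fun k φ => ⟨cyclen_map_commutator_zpow φ k,
    cyclen_map_commutator_zpow (φ.trans psiAut.symm) k⟩, hA, hB, fun h => ?_⟩
  simpa [hA, hB] using congrFun h genB
end

section
/- Let F₂ = F(a,b) be the free group with basis {a,b} and let [a,b] = aba⁻¹b⁻¹. For every automorphism φ of F₂, the element φ([a,b]) is conjugate in F₂ to [a,b] or to [a,b]⁻¹. -/
open scoped commutatorElement

namespace NielsenPf
open FreeGroup List

abbrev F := FreeGroup (Fin 2)
abbrev Wd := List ((Fin 2) × Bool)

def RR (x y : (Fin 2) × Bool) : Prop := ¬(x.1 = y.1 ∧ x.2 = !y.2)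
def Reduced (w : Wd) : Prop := List.Chain' RR w
def nl (g : F) : ℕ := g.toWord.length
def Kc : F := ⁅FreeGroup.of (0 : Fin 2), FreeGroup.of (1 : Fin 2)⁆
def Good (u v : F) : Prop := IsConj ⁅u,v⁆ Kc ∨ IsConj ⁅u,v⁆ Kc⁻¹

theorem reduce_eq_self_of_reduced : ∀ {w : Wd}, Reduced w → FreeGroup.reduce w = w := by
  intro w
  induction w with
  | nil => intro _; rfl
  | cons x t ih =>
    intro h
    have ht : Reduced t := h.tail
    rw [FreeGroup.reduce.cons, ih ht]
    cases t with
    | nil => rfl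
    | cons y t' =>
      have hxy : RR x y := (List.isChain_cons_cons.mp h).1
      simp only [RR] at hxy
      exact if_neg hxy

theorem reduced_reduce : ∀ (w : Wd), Reduced (FreeGroup.reduce w) := by
  intro w
  induction w with
  | nil => exact List.isChain_nil
  | cons x t ih =>
    rw [FreeGroup.reduce.cons]
    rcases h : FreeGroup.reduce t with _ | ⟨y, tl⟩
    · exact List.isChain_singleton x
    · rw [h] at ih
      show Reduced (if x.1 = y.1 ∧ x.2 = !y.2 then tl else x :: y :: tl)
      by_cases hc : x.1 = y.1 ∧ x.2 = !y.2
      · rw [if_pos hc]; exact ih.tail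
      · rw [if_neg hc]; exact List.isChain_cons_cons.mpr ⟨hc, ih⟩

theorem reduced_toWord (g : F) : Reduced g.toWord := by
  rw [← FreeGroup.reduce_toWord]; exact reduced_reduce _

theorem toWord_mk_reduced {w : Wd} (h : Reduced w) : (FreeGroup.mk w).toWord = w := by
  rw [FreeGroup.toWord_mk, reduce_eq_self_of_reduced h]

theorem invRev_append (a b : Wd) : invRev (a ++ b) = invRev b ++ invRev a := by
  simp [invRev]

theorem invRev_singleton (x : (Fin 2) × Bool) : invRev [x] = [(x.1, !x.2)] := by
  simp [invRev]

/-- Maximal cancellation decomposition for the product of two elements. -/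
theorem lemC : ∀ (n : ℕ) (g h : F), g.toWord.length ≤ n →
    ∃ p c q : Wd, g.toWord = p ++ c ∧ h.toWord = invRev c ++ q ∧ (g*h).toWord = p ++ q := by
  intro n
  induction n with
  | zero =>
    intro g h hg
    refine ⟨[], [], h.toWord, ?_, ?_, ?_⟩
    · simpa using List.eq_nil_of_length_eq_zero (Nat.le_zero.mp hg)
    · simp [invRev]
    · have : g = 1 := FreeGroup.toWord_eq_nil_iff.mp
        (List.eq_nil_of_length_eq_zero (Nat.le_zero.mp hg))
      simp [this]
  | succ n ih =>
    intro g h hg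
    rcases List.eq_nil_or_concat g.toWord with hnil | ⟨s', x, hgw⟩
    · refine ⟨[], [], h.toWord, by simpa using hnil, by simp [invRev], ?_⟩
      have : g = 1 := FreeGroup.toWord_eq_nil_iff.mp hnil
      simp [this]
    · rw [List.concat_eq_append] at hgw
      rcases hh : h.toWord with _ | ⟨y, t'⟩
      · refine ⟨g.toWord, [], [], by simp, by simp [invRev], ?_⟩
        have : h = 1 := FreeGroup.toWord_eq_nil_iff.mp hh
        simp [this]
      · by_cases hc : x.1 = y.1 ∧ x.2 = !y.2
        · -- cancellation of x against y
          have hyx : y = (x.1, !x.2) := by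
            obtain ⟨h1, h2⟩ := hc
            cases y with
            | mk y1 y2 => simp at h1 h2 ⊢; exact ⟨h1.symm, by rw [h2]; simp⟩
          have hrs' : Reduced s' := (reduced_toWord g).prefix ⟨[x], hgw.symm⟩
          have hrt' : Reduced t' := by
            have := reduced_toWord h; rw [hh] at this; exact this.tail
          set g₁ := FreeGroup.mk s' with hg₁
          set h₁ := FreeGroup.mk t' with hh₁
          have hg₁w : g₁.toWord = s' := toWord_mk_reduced hrs'
          have hh₁w : h₁.toWord = t' := toWord_mk_reduced hrt'
          have hlen : g₁.toWord.length ≤ n := by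
            rw [hg₁w]
            have : s'.length + 1 ≤ n + 1 := by
              simpa [hgw] using hg
            omega
          have hprod : g * h = g₁ * h₁ := by
            have hgm : g = FreeGroup.mk (s' ++ [x]) := by
              rw [← hgw, FreeGroup.mk_toWord]
            have hhm : h = FreeGroup.mk (y :: t') := by
              rw [← hh, FreeGroup.mk_toWord]
            have hxy1 : FreeGroup.mk [x] * FreeGroup.mk [y] = 1 := by
              have : FreeGroup.mk [y] = (FreeGroup.mk [x])⁻¹ := by
                rw [FreeGroup.inv_mk, invRev_singleton, hyx]
              rw [this, mul_inv_cancel]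
            calc g * h = FreeGroup.mk (s' ++ [x]) * FreeGroup.mk (y :: t') := by
                  rw [← hgm, ← hhm]
              _ = (FreeGroup.mk s' * FreeGroup.mk [x]) * (FreeGroup.mk [y] * FreeGroup.mk t') := by
                  rw [FreeGroup.mul_mk, FreeGroup.mul_mk]; congr 1 <;> simp
              _ = FreeGroup.mk s' * (FreeGroup.mk [x] * FreeGroup.mk [y]) * FreeGroup.mk t' := by
                  group
              _ = g₁ * h₁ := by rw [hxy1]; group; rfl
          obtain ⟨p, c, q, h1, h2, h3⟩ := ih g₁ h₁ hlen
          refine ⟨p, c ++ [x], q, ?_, ?_, ?_⟩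
          · rw [hgw, ← List.append_assoc, ← h1, hg₁w]
          · rw [invRev_append, invRev_singleton, ← hyx]
            rw [hg₁w] at h1
            rw [← hh₁w, h2]; simp
          · rw [hprod, h3]
        · -- no cancellation: concatenation is reduced
          refine ⟨g.toWord, [], h.toWord, by simp, by rw [hh]; simp [invRev], ?_⟩
          have hred : Reduced (g.toWord ++ h.toWord) := by
            apply (reduced_toWord g).append (reduced_toWord h)
            intro a ha b hb
            rw [hgw, List.getLast?_concat] at ha
            rw [hh] at hb
            simp at ha hb
            subst ha; subst hb
            exact hc
          have : g * h = FreeGroup.mk (g.toWord ++ h.toWord) := by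
            rw [← FreeGroup.mul_mk, FreeGroup.mk_toWord, FreeGroup.mk_toWord]
          rw [this, toWord_mk_reduced hred]

theorem lemC' (g h : F) :
    ∃ p c q : Wd, g.toWord = p ++ c ∧ h.toWord = invRev c ++ q ∧ (g*h).toWord = p ++ q :=
  lemC g.toWord.length g h le_rfl



theorem nl_inv (g : F) : nl g⁻¹ = nl g := by
  simp [nl, FreeGroup.toWord_inv, FreeGroup.invRev_length]

theorem nl_mk_le (L : Wd) : nl (FreeGroup.mk L) ≤ L.length := FreeGroup.norm_mk_le

theorem nl_eq_zero {g : F} : nl g = 0 ↔ g = 1 := by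
  rw [show nl g = FreeGroup.norm g from rfl, FreeGroup.norm_eq_zero]

theorem nl_one : nl (1 : F) = 0 := by simp [nl, FreeGroup.toWord_one]

theorem getElem_idx_congr (l : Wd) {i j : ℕ} (h : i = j) (hi : i < l.length) :
    getElem l i hi = getElem l j (h ▸ hi) := by subst h; rfl

theorem two_c_le_aux (w p c q : Wd) (hw : Reduced w) (hp : w = p ++ c)
    (hq : w = invRev c ++ q) : 2 * c.length ≤ w.length := by
  by_contra hlt
  push_neg at hlt
  have hic : (invRev c).length = c.length := FreeGroup.invRev_length
  have hlen1 : w.length = p.length + c.length := by rw [hp]; simp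
  have hlen2 : w.length = c.length + q.length := by rw [hq]; simp [hic]
  have hinv : ∀ i (hi : i < c.length),
      getElem (invRev c) i (by omega) =
        ((getElem c (c.length-1-i) (by omega)).1,
          !((getElem c (c.length-1-i) (by omega)).2)) := by
    intro i hi
    show getElem ((c.map fun x => (x.1, !x.2)).reverse) i (by simp; omega) = _
    rw [List.getElem_reverse, List.getElem_map]
    simp
  have hkey : ∀ i j (hi : i < c.length) (hj : j < w.length),
      i + j + 1 = w.length →
      getElem w i (by omega) = ((getElem w j hj).1, !((getElem w j hj).2)) := by
    intro i j hi hj hij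
    have e1 : getElem w i (by omega) = getElem (invRev c) i (by omega) := by
      rw [List.getElem_of_eq hq]
      exact List.getElem_append_left (by omega)
    have e4 : getElem w j hj = getElem c (c.length-1-i) (by omega) := by
      rw [List.getElem_of_eq hp]
      rw [List.getElem_append_right (by omega)]
      exact getElem_idx_congr c (by omega) _
    rw [e1, hinv i hi, e4]
  have hchain := List.isChain_iff_getElem.mp hw
  rcases Nat.even_or_odd w.length with ⟨m, hm⟩ | ⟨m, hm⟩
  · have hm1 : 1 ≤ m := by omega
    have h := hkey (m-1) m (by omega) (by omega) (by omega)
    have hc := hchain (m-1) (by omega)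
    rw [getElem_idx_congr w (show m - 1 + 1 = m by omega) _] at hc
    exact hc ⟨by rw [h], by rw [h]⟩
  · have h := hkey m m (by omega) (by omega) (by omega)
    have : (getElem w m (by omega)).2 = !((getElem w m (by omega)).2) := by
      conv_lhs => rw [h]
    simp at this

theorem nl_sq_ge (u : F)
    (hC : ∃ p c q : Wd, u.toWord = p ++ c ∧ u.toWord = invRev c ++ q ∧
      (u*u).toWord = p ++ q) : nl u ≤ nl (u * u) := by
  obtain ⟨p, c, q, h1, h2, h3⟩ := hC
  have h2c := two_c_le_aux u.toWord p c q (reduced_toWord u) h1 h2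
  have l1 : nl u = p.length + c.length := by rw [nl, h1]; simp
  have l2 : nl u = c.length + q.length := by
    rw [nl, h2]; simp [FreeGroup.invRev_length]
  have l3 : nl (u*u) = p.length + q.length := by rw [nl, h3]; simp
  have : nl u = (toWord u).length := rfl
  omega

/-- key bound: if `c` is a suffix of `y` (as word) and `invRev c` a prefix of `z`, the
product length drops by at least `2|c|`. -/
theorem cancel_bound (y z : F) (c y₁ q : Wd) (hy : y.toWord = y₁ ++ c)
    (hz : z.toWord = invRev c ++ q) : nl (y*z) + c.length + c.length ≤ nl y + nl z := by
  have hyz : y * z = FreeGroup.mk (y₁ ++ q) := by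
    have : y * z = FreeGroup.mk (y₁ ++ c) * FreeGroup.mk (invRev c ++ q) := by
      rw [← hy, ← hz, FreeGroup.mk_toWord, FreeGroup.mk_toWord]
    rw [this, ← FreeGroup.mul_mk, ← FreeGroup.mul_mk, ← FreeGroup.mul_mk]
    have hcc : FreeGroup.mk c * FreeGroup.mk (invRev c) = 1 := by
      rw [← FreeGroup.inv_mk, mul_inv_cancel]
    rw [mul_assoc, ← mul_assoc (FreeGroup.mk c), hcc, one_mul, FreeGroup.mul_mk]
  have hle : nl (y*z) ≤ y₁.length + q.length := by
    rw [hyz]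
    calc nl (FreeGroup.mk (y₁ ++ q)) ≤ (y₁ ++ q).length := nl_mk_le _
      _ = y₁.length + q.length := by simp
  have e1 : nl y = y₁.length + c.length := by rw [nl, hy]; simp
  have e2 : nl z = c.length + q.length := by
    rw [nl, hz]; simp [FreeGroup.invRev_length]
  omega



theorem isConj_inv' {x y : F} (h : IsConj x y) : IsConj x⁻¹ y⁻¹ := by
  obtain ⟨c, hc⟩ := isConj_iff.mp h
  exact isConj_iff.mpr ⟨c, by rw [← hc]; group⟩

theorem good_iff_of_conj {u v u' v' g : F} (h : ⁅u',v'⁆ = g * ⁅u,v⁆ * g⁻¹) :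
    (Good u' v' ↔ Good u v) := by
  have hc : IsConj ⁅u',v'⁆ ⁅u,v⁆ := isConj_iff.mpr ⟨g⁻¹, by rw [h]; group⟩
  constructor
  · rintro (h1 | h1)
    · exact Or.inl (hc.symm.trans h1)
    · exact Or.inr (hc.symm.trans h1)
  · rintro (h1 | h1)
    · exact Or.inl (hc.trans h1)
    · exact Or.inr (hc.trans h1)

theorem good_iff_of_conj_inv {u v u' v' g : F} (h : ⁅u',v'⁆ = g * ⁅u,v⁆⁻¹ * g⁻¹) :
    (Good u' v' ↔ Good u v) := by
  have hc : IsConj ⁅u',v'⁆ ⁅u,v⁆⁻¹ := isConj_iff.mpr ⟨g⁻¹, by rw [h]; group⟩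
  constructor
  · rintro (h1 | h1)
    · exact Or.inr (by simpa using isConj_inv' (hc.symm.trans h1))
    · exact Or.inl (by simpa using isConj_inv' (hc.symm.trans h1))
  · rintro (h1 | h1)
    · exact Or.inr (hc.trans (by simpa using isConj_inv' h1))
    · exact Or.inl (hc.trans (by simpa using isConj_inv' h1))

inductive Move : F × F → F × F → Prop
  | swap (u v : F) : Move (u,v) (v,u)
  | invL (u v : F) : Move (u,v) (u⁻¹, v)
  | mulLr (u v : F) : Move (u,v) (u*v, v)
  | conj (g u v : F) : Move (u,v) (g*u*g⁻¹, g*v*g⁻¹)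

def Reach : F × F → F × F → Prop := Relation.ReflTransGen Move

theorem move_good {P Q : F × F} (m : Move P Q) : Good Q.1 Q.2 ↔ Good P.1 P.2 := by
  cases m with
  | swap u v =>
    exact good_iff_of_conj_inv (g := 1) (by simp [commutatorElement_def]; group)
  | invL u v =>
    exact good_iff_of_conj_inv (g := u⁻¹) (by simp [commutatorElement_def]; group)
  | mulLr u v =>
    exact good_iff_of_conj (g := 1) (by simp [commutatorElement_def])
  | conj g u v =>
    exact good_iff_of_conj (g := g) (by simp [commutatorElement_def]; group)

theorem closure_pair_top {x y x' y' : F} (hx : x ∈ Subgroup.closure {x', y'})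
    (hy : y ∈ Subgroup.closure {x', y'}) (h : Subgroup.closure {x,y} = ⊤) :
    Subgroup.closure ({x',y'} : Set F) = ⊤ := by
  rw [eq_top_iff, ← h]
  apply Subgroup.closure_le _ |>.mpr
  intro z hz
  simp only [Set.mem_insert_iff, Set.mem_singleton_iff] at hz
  rcases hz with rfl | rfl
  · exact hx
  · exact hy

theorem move_closure {P Q : F × F} (m : Move P Q)
    (h : Subgroup.closure {P.1, P.2} = ⊤) : Subgroup.closure {Q.1, Q.2} = ⊤ := by
  cases m with
  | swap u v =>
    exact closure_pair_top (Subgroup.subset_closure (by simp))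
      (Subgroup.subset_closure (by simp)) h
  | invL u v =>
    apply closure_pair_top (x := u) (y := v) ?_ ?_ h
    · have : (u⁻¹ : F) ∈ Subgroup.closure {u⁻¹, v} := Subgroup.subset_closure (by simp)
      simpa using inv_mem this
    · exact Subgroup.subset_closure (by simp)
  | mulLr u v =>
    apply closure_pair_top (x := u) (y := v) ?_ ?_ h
    · have h1 : (u*v : F) ∈ Subgroup.closure {u*v, v} := Subgroup.subset_closure (by simp)
      have h2 : (v : F) ∈ Subgroup.closure {u*v, v} := Subgroup.subset_closure (by simp)
      simpa using mul_mem h1 (inv_mem h2)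
    · exact Subgroup.subset_closure (by simp)
  | conj g u v =>
    rw [eq_top_iff]
    intro x _
    have hx : g⁻¹ * x * g ∈ Subgroup.closure {u, v} := by rw [h]; trivial
    have key : ∀ z ∈ Subgroup.closure ({u, v} : Set F),
        g * z * g⁻¹ ∈ Subgroup.closure ({g*u*g⁻¹, g*v*g⁻¹} : Set F) := by
      intro z hz
      induction hz using Subgroup.closure_induction with
      | mem w hw =>
        rcases hw with rfl | hw
        · exact Subgroup.subset_closure (by simp)
        · simp only [Set.mem_singleton_iff] at hw
          subst hw
          exact Subgroup.subset_closure (by simp)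
      | one => simpa using one_mem _
      | mul a b _ _ ha hb =>
        have := mul_mem ha hb
        simpa [mul_assoc] using this
      | inv a _ ha =>
        have := inv_mem ha
        simpa [mul_assoc] using this
    have := key _ hx
    simpa [mul_assoc] using this

theorem reach_good {P Q : F × F} (h : Reach P Q) : Good Q.1 Q.2 → Good P.1 P.2 := by
  induction h with
  | refl => exact id
  | tail h₁ m ih => intro hg; exact ih ((move_good m).mp hg)

theorem reach_closure {P Q : F × F} (h : Reach P Q)
    (hc : Subgroup.closure {P.1, P.2} = ⊤) : Subgroup.closure {Q.1, Q.2} = ⊤ := by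
  induction h with
  | refl => exact hc
  | tail h₁ m ih => exact move_closure m ih

theorem Reach.trans' {P Q R : F × F} (h1 : Reach P Q) (h2 : Reach Q R) : Reach P R :=
  Relation.ReflTransGen.trans h1 h2

theorem reach_swap (u v : F) : Reach (u,v) (v,u) := Relation.ReflTransGen.single (.swap u v)
theorem reach_invL (u v : F) : Reach (u,v) (u⁻¹,v) := Relation.ReflTransGen.single (.invL u v)
theorem reach_mulLr (u v : F) : Reach (u,v) (u*v,v) := Relation.ReflTransGen.single (.mulLr u v)
theorem reach_conj (g u v : F) : Reach (u,v) (g*u*g⁻¹, g*v*g⁻¹) :=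
  Relation.ReflTransGen.single (.conj g u v)

theorem reach_invR (u v : F) : Reach (u,v) (u,v⁻¹) :=
  ((reach_swap u v).trans' (reach_invL v u)).trans' (reach_swap v⁻¹ u)

theorem reach_invL' (u v : F) : Reach (u⁻¹,v) (u,v) := by
  have := reach_invL u⁻¹ v
  simpa using this

theorem reach_invR' (u v : F) : Reach (u,v⁻¹) (u,v) := by
  have := reach_invR u v⁻¹
  simpa using this

/-- u ↦ v*u -/
theorem reach_mulLl (u v : F) : Reach (u,v) (v*u,v) := by
  have h : Reach (u,v) (u⁻¹*v⁻¹, v⁻¹) :=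
    ((reach_invL u v).trans' (reach_invR u⁻¹ v)).trans' (reach_mulLr u⁻¹ v⁻¹)
  have h2 : Reach (u⁻¹*v⁻¹, v⁻¹) (v*u, v) := by
    have := (reach_invL (u⁻¹*v⁻¹) v⁻¹).trans' (reach_invR (u⁻¹*v⁻¹)⁻¹ v⁻¹)
    simpa [mul_inv_rev] using this
  exact h.trans' h2

/-- v ↦ v*u -/
theorem reach_mulRr (u v : F) : Reach (u,v) (u,v*u) :=
  ((reach_swap u v).trans' (reach_mulLr v u)).trans' (reach_swap (v*u) u)

/-- v ↦ u*v -/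
theorem reach_mulRl (u v : F) : Reach (u,v) (u,u*v) :=
  ((reach_swap u v).trans' (reach_mulLl v u)).trans' (reach_swap (u*v) u)


theorem not_reduced_cancel (P : Wd) (hP : P ≠ []) : ¬ Reduced (P ++ invRev P) := by
  intro h
  rcases List.eq_nil_or_concat P with rfl | ⟨P', l, rfl⟩
  · exact hP rfl
  · rw [List.concat_eq_append, invRev_append, invRev_singleton] at h
    have hinf : [l, (l.1, !l.2)] <:+: (P' ++ [l] ++ ([(l.1, !l.2)] ++ invRev P')) := by
      refine ⟨P', invRev P', by simp⟩
    have := h.infix hinf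
    have hrel : RR l (l.1, !l.2) := (List.isChain_cons_cons.mp this).1
    simp [RR] at hrel

theorem keyA (u v : F) (P Q v₀ v₁ : Wd)
    (hu : u.toWord = P ++ Q) (hPQ : P.length = Q.length) (hk : 1 ≤ P.length)
    (hv1 : v.toWord = v₀ ++ invRev P) (hv2 : v.toWord = invRev Q ++ v₁)
    (hlen : 2 * P.length ≤ nl v) (hne : v ≠ u⁻¹) :
    ∃ u' v', Reach (u,v) (u',v') ∧ nl u' + nl v' < nl u + nl v := by
  have hIP : (invRev P).length = P.length := FreeGroup.invRev_length
  have hIQ : (invRev Q).length = Q.length := FreeGroup.invRev_length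
  have hnlu : nl u = P.length + Q.length := by rw [nl, hu]; simp
  have hnlv : nl v = v₀.length + P.length := by rw [nl, hv1]; simp [hIP]
  have hpre1 : invRev Q <+: v.toWord := ⟨v₁, hv2.symm⟩
  have hpre2 : v₀ <+: v.toWord := ⟨invRev P, hv1.symm⟩
  have hQv : invRev Q <+: v₀ := List.prefix_of_prefix_length_le hpre1 hpre2 (by omega)
  obtain ⟨m', hm'⟩ := hQv
  rcases List.eq_nil_or_concat' m' with rfl | ⟨m₀, l, rfl⟩
  · -- v = u⁻¹
    exfalso
    apply hne
    apply FreeGroup.toWord_injective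
    rw [hv1, ← hm', FreeGroup.toWord_inv, hu, invRev_append]
    simp
  · have hm'ne : (m₀ ++ [l]) ≠ [] := by simp
    set m := m₀ ++ [l] with hm
    have hvw : v.toWord = invRev Q ++ m ++ invRev P := by
      rw [hv1, ← hm']
    have hv' : v = (FreeGroup.mk Q)⁻¹ * FreeGroup.mk m * (FreeGroup.mk P)⁻¹ := by
      rw [FreeGroup.inv_mk, FreeGroup.inv_mk, FreeGroup.mul_mk, FreeGroup.mul_mk,
        ← hvw, FreeGroup.mk_toWord]
    have hu' : u = FreeGroup.mk P * FreeGroup.mk Q := by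
      rw [FreeGroup.mul_mk, ← hu, FreeGroup.mk_toWord]
    refine ⟨FreeGroup.mk (Q ++ P), FreeGroup.mk m, ?_, ?_⟩
    · have r1 : Reach (u,v) (u, v*u) := reach_mulRr u v
      have r2 : Reach (u, v*u)
          (FreeGroup.mk Q * u * (FreeGroup.mk Q)⁻¹,
           FreeGroup.mk Q * (v*u) * (FreeGroup.mk Q)⁻¹) := reach_conj _ _ _
      have e1 : FreeGroup.mk Q * u * (FreeGroup.mk Q)⁻¹ = FreeGroup.mk (Q ++ P) := by
        rw [hu', ← FreeGroup.mul_mk]; group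
      have e2 : FreeGroup.mk Q * (v*u) * (FreeGroup.mk Q)⁻¹ = FreeGroup.mk m := by
        rw [hu', hv']; group
      rw [e1, e2] at r2
      exact r1.trans' r2
    · have b1 : nl (FreeGroup.mk (Q ++ P)) ≤ Q.length + P.length := by
        calc nl (FreeGroup.mk (Q ++ P)) ≤ (Q ++ P).length := nl_mk_le _
          _ = Q.length + P.length := by simp
      have b2 : nl (FreeGroup.mk m) ≤ m.length := nl_mk_le _
      have hml : nl v = Q.length + m.length + P.length := by
        rw [nl, hvw]; simp [hIP, hIQ]; omega
      have hmne : 1 ≤ m.length := by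
        rcases Nat.eq_zero_or_pos m.length with h0 | h1
        · exact absurd (List.eq_nil_of_length_eq_zero h0) hm'ne
        · exact h1
      omega


def Sset (u v : F) : Set F := {u, u⁻¹, v, v⁻¹}

theorem Sset_inv {u v x : F} (hx : x ∈ Sset u v) : x⁻¹ ∈ Sset u v := by
  rcases hx with rfl | rfl | rfl | rfl <;> simp [Sset]

theorem Sset_ne_one {u v x : F} (hu : u ≠ 1) (hv : v ≠ 1) (hx : x ∈ Sset u v) : x ≠ 1 := by
  rcases hx with rfl | rfl | rfl | rfl <;> simp_all [Sset]

section Surv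

variable (u v : F)
variable (hu1 : u ≠ 1) (hv1 : v ≠ 1)
variable (H1 : ∀ x ∈ Sset u v, ∀ y ∈ Sset u v, x*y ≠ 1 →
    nl x ≤ nl (x*y) ∧ nl y ≤ nl (x*y))
variable (H2 : ∀ x ∈ Sset u v, ∀ y ∈ Sset u v, ∀ z ∈ Sset u v, x*y ≠ 1 → y*z ≠ 1 →
    nl x + nl z < nl (x*y) + nl (y*z))

include hu1 hv1 H1 H2 in
theorem surv : ∀ (l' : List F) (z : F), z ∈ Sset u v → (∀ x ∈ l', x ∈ Sset u v) →
    List.Chain' (fun a b => a*b ≠ 1) (l' ++ [z]) →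
    ∃ (w s : Wd) (e : ℕ),
      ((l' ++ [z]).prod).toWord = w ++ s ∧ s ≠ [] ∧ l'.length ≤ w.length ∧
      nl z = s.length + e ∧ (∃ z₀ : Wd, z.toWord = z₀ ++ s) ∧
      (∀ z' ∈ Sset u v, z * z' ≠ 1 → 2*e + nl z' < nl z + nl (z * z')) := by
  intro l'
  induction l' using List.reverseRecOn with
  | nil =>
    intro z hz _ _
    have hzne : z ≠ 1 := Sset_ne_one hu1 hv1 hz
    have hnl : 1 ≤ nl z := by
      rcases Nat.eq_zero_or_pos (nl z) with h0 | h1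
      · exact absurd (nl_eq_zero.mp h0) hzne
      · exact h1
    refine ⟨[], z.toWord, 0, by simp, ?_, by simp, by simp [nl], ⟨[], by simp⟩, ?_⟩
    · intro h
      exact hzne (nl_eq_zero.mp (by simp [nl, h]))
    · intro z' hz' hzz'
      have := (H1 z hz z' hz' hzz').2
      omega
  | append_singleton l'' y IH =>
    intro z hz hmem hch
    have hy : y ∈ Sset u v := hmem y (by simp)
    have hmem'' : ∀ x ∈ l'', x ∈ Sset u v := fun x hx => hmem x (by simp [hx])
    have hch'' : List.Chain' (fun a b => a*b ≠ 1) (l'' ++ [y]) :=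
      hch.prefix ⟨[z], by simp⟩
    have hyz : y * z ≠ 1 := by
      have h2 : List.Chain' (fun a b => a*b ≠ 1) [y, z] :=
        hch.infix ⟨l'', [], by simp⟩
      exact (List.isChain_cons_cons.mp h2).1
    obtain ⟨w, s, e, hGw, hsne, hwlen, hnye, ⟨y₀, hy₀⟩, Hnext⟩ := IH y hy hmem'' hch''
    set G := (l'' ++ [y]).prod with hG
    have hprodeq : (l'' ++ [y] ++ [z]).prod = G * z := by
      rw [hG, List.prod_append]
      simp [mul_assoc]
    obtain ⟨p, c, q, hp, hq, hpq⟩ := lemC' G z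
    -- length bookkeeping
    have len1 : G.toWord.length = w.length + s.length := by rw [hGw]; simp
    have len2 : G.toWord.length = p.length + c.length := by rw [hp]; simp
    have len3 : nl z = c.length + q.length := by
      rw [nl, hq]; simp [FreeGroup.invRev_length]
    have hcs : c.length < s.length := by
      by_contra hcge
      push_neg at hcge
      have hssfx : s <:+ G.toWord := ⟨w, hGw.symm⟩
      have hcsfx : c <:+ G.toWord := ⟨p, hp.symm⟩
      have hsc : s <:+ c := List.suffix_of_suffix_length_le hssfx hcsfx hcge
      obtain ⟨c₀, hc₀⟩ := hsc
      have hzw : z.toWord = invRev s ++ (invRev c₀ ++ q) := by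
        rw [hq, ← hc₀, invRev_append]; simp
      have hcb := cancel_bound y z s y₀ (invRev c₀ ++ q) hy₀ hzw
      have hnx := Hnext z hz hyz
      omega
    have hcsfx : c <:+ G.toWord := ⟨p, hp.symm⟩
    have hssfx : s <:+ G.toWord := ⟨w, hGw.symm⟩
    have hcsuf : c <:+ s := List.suffix_of_suffix_length_le hcsfx hssfx (by omega)
    have hcy : c <:+ y.toWord := hcsuf.trans ⟨y₀, hy₀.symm⟩
    obtain ⟨y₁, hy₁⟩ := hcy
    have hcb := cancel_bound y z c y₁ q hy₁.symm hq
    have hqne : q ≠ [] := by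
      intro hqnil
      subst hqnil
      simp only [List.length_nil] at len3
      have h1yz := (H1 y hy z hz hyz).1
      have hzne : z ≠ 1 := Sset_ne_one hu1 hv1 hz
      have : nl z ≠ 0 := fun h0 => hzne (nl_eq_zero.mp h0)
      omega
    refine ⟨p, q, c.length, ?_, hqne, ?_, ?_, ⟨invRev c, hq⟩, ?_⟩
    · rw [hprodeq]; exact hpq
    · -- (l''++[y]).length ≤ p.length
      have : l''.length ≤ w.length := hwlen
      simp only [List.length_append, List.length_singleton]
      omega
    · omega
    · intro z'' hz'' hzz''
      have h2 := H2 y hy z hz z'' hz'' hyz hzz''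
      omega

end Surv


/-- stack-based cancellation of a word over the generators -/
def reduceL : List F → List F :=
  List.foldr (fun x s => match s with
    | [] => [x]
    | y :: t => if x * y = 1 then t else x :: y :: t) []

theorem reduceL_cons_nil (a : F) (t : List F) (hr : reduceL t = []) :
    reduceL (a :: t) = [a] := by
  show (fun x s => match s with
    | [] => [x]
    | y :: t => if x * y = 1 then t else x :: y :: t) a (reduceL t) = _
  rw [hr]

theorem reduceL_cons_cons (a y : F) (t : List F) (t' : List F) (hr : reduceL t = y :: t') :
    reduceL (a :: t) = if a*y = 1 then t' else a :: y :: t' := by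
  show (fun x s => match s with
    | [] => [x]
    | y :: t => if x * y = 1 then t else x :: y :: t) a (reduceL t) = _
  rw [hr]

theorem reduceL_mem {u v : F} : ∀ (l : List F), (∀ x ∈ l, x ∈ Sset u v) →
    ∀ x ∈ reduceL l, x ∈ Sset u v := by
  intro l
  induction l with
  | nil => intro _ x hx; simp [reduceL] at hx
  | cons a t ih =>
    intro hmem x hx
    have ha : a ∈ Sset u v := hmem a (by simp)
    have ht : ∀ x ∈ t, x ∈ Sset u v := fun x hx => hmem x (by simp [hx])
    rcases hr : reduceL t with _ | ⟨y, t'⟩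
    · rw [reduceL_cons_nil a t hr] at hx
      simp at hx
      subst hx; exact ha
    · rw [reduceL_cons_cons a y t t' hr] at hx
      by_cases hc : a * y = 1
      · rw [if_pos hc] at hx
        exact ih ht x (by rw [hr]; simp [hx])
      · rw [if_neg hc] at hx
        rcases List.mem_cons.mp hx with rfl | hx
        · exact ha
        · exact ih ht x (by rw [hr]; exact hx)

theorem reduceL_prod : ∀ (l : List F), (reduceL l).prod = l.prod := by
  intro l
  induction l with
  | nil => simp [reduceL]
  | cons a t ih =>
    rcases hr : reduceL t with _ | ⟨y, t'⟩
    · rw [reduceL_cons_nil a t hr]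
      rw [hr] at ih
      simp at ih ⊢
      rw [← ih]
    · rw [reduceL_cons_cons a y t t' hr]
      rw [hr] at ih
      by_cases hc : a * y = 1
      · rw [if_pos hc]
        simp only [List.prod_cons] at ih ⊢
        rw [← ih, ← mul_assoc, hc, one_mul]
      · rw [if_neg hc]
        simp only [List.prod_cons] at ih ⊢
        rw [← ih]

theorem reduceL_chain : ∀ (l : List F), List.Chain' (fun a b => a*b ≠ 1) (reduceL l) := by
  intro l
  induction l with
  | nil => simp [reduceL]; exact List.isChain_nil
  | cons a t ih =>
    rcases hr : reduceL t with _ | ⟨y, t'⟩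
    · rw [reduceL_cons_nil a t hr]
      exact List.isChain_singleton a
    · rw [reduceL_cons_cons a y t t' hr]
      rw [hr] at ih
      by_cases hc : a * y = 1
      · rw [if_pos hc]
        exact ih.tail
      · rw [if_neg hc]
        exact List.isChain_cons_cons.mpr ⟨hc, ih⟩

theorem closure_to_list {u v g : F} (hg : g ∈ Subgroup.closure ({u, v} : Set F)) :
    ∃ l : List F, (∀ x ∈ l, x ∈ Sset u v) ∧ l.prod = g := by
  induction hg using Subgroup.closure_induction with
  | mem x hx =>
    refine ⟨[x], ?_, by simp⟩
    intro y hy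
    simp at hy
    subst hy
    rcases hx with rfl | hx
    · exact Or.inl rfl
    · simp only [Set.mem_singleton_iff] at hx
      subst hx
      exact Or.inr (Or.inr (Or.inl rfl))
  | one => exact ⟨[], by simp, by simp⟩
  | mul a b _ _ iha ihb =>
    obtain ⟨l₁, h1, h1p⟩ := iha
    obtain ⟨l₂, h2, h2p⟩ := ihb
    refine ⟨l₁ ++ l₂, ?_, by rw [List.prod_append, h1p, h2p]⟩
    intro x hx
    rcases List.mem_append.mp hx with h | h
    · exact h1 x h
    · exact h2 x h
  | inv a _ iha =>
    obtain ⟨l, hmem, hp⟩ := iha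
    refine ⟨(l.map (fun x => x⁻¹)).reverse, ?_, ?_⟩
    · intro x hx
      simp only [List.mem_reverse, List.mem_map] at hx
      obtain ⟨y, hy, rfl⟩ := hx
      exact Sset_inv (hmem y hy)
    · rw [← hp]
      rw [List.prod_reverse_noncomm]
      simp

theorem closure_to_chain {u v g : F} (hg : g ∈ Subgroup.closure ({u, v} : Set F)) :
    ∃ l : List F, (∀ x ∈ l, x ∈ Sset u v) ∧ List.Chain' (fun a b => a*b ≠ 1) l ∧ l.prod = g := by
  obtain ⟨l, hmem, hp⟩ := closure_to_list hg
  exact ⟨reduceL l, reduceL_mem l hmem, reduceL_chain l, by rw [reduceL_prod, hp]⟩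


theorem ab_ne_ba : (FreeGroup.of (0 : Fin 2)) * FreeGroup.of 1 ≠ FreeGroup.of 1 * FreeGroup.of 0 := by
  intro h
  have h2 := congrArg FreeGroup.toWord h
  have e0 : (FreeGroup.of (0 : Fin 2)) = FreeGroup.mk [((0:Fin 2), true)] := rfl
  have e1 : (FreeGroup.of (1 : Fin 2)) = FreeGroup.mk [((1:Fin 2), true)] := rfl
  rw [e0, e1, FreeGroup.mul_mk, FreeGroup.mul_mk] at h2
  rw [FreeGroup.toWord_mk, FreeGroup.toWord_mk] at h2
  have : FreeGroup.reduce (α := Fin 2) ([((0:Fin 2), true)] ++ [((1:Fin 2), true)]) =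
      [((0:Fin 2), true), ((1:Fin 2), true)] := by decide
  have h3 : FreeGroup.reduce (α := Fin 2) ([((1:Fin 2), true)] ++ [((0:Fin 2), true)]) =
      [((1:Fin 2), true), ((0:Fin 2), true)] := by decide
  rw [this, h3] at h2
  simp at h2

theorem zpowers_ne_top (w : F) : Subgroup.zpowers w ≠ ⊤ := by
  intro h
  have h0 : (FreeGroup.of (0 : Fin 2)) ∈ Subgroup.zpowers w := by rw [h]; trivial
  have h1 : (FreeGroup.of (1 : Fin 2)) ∈ Subgroup.zpowers w := by rw [h]; trivial
  obtain ⟨m, hm⟩ := Subgroup.mem_zpowers_iff.mp h0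
  obtain ⟨k, hk⟩ := Subgroup.mem_zpowers_iff.mp h1
  apply ab_ne_ba
  rw [← hm, ← hk, ← zpow_add, ← zpow_add, add_comm]

theorem main_good : ∀ (n : ℕ) (u v : F), nl u + nl v ≤ n →
    Subgroup.closure ({u,v} : Set F) = ⊤ → Good u v := by
  intro n
  induction n using Nat.strong_induction_on with
  | _ n IH =>
  intro u v hn htop
  have hle_z : ∀ w : F, ¬ (({u,v} : Set F) ⊆ ↑(Subgroup.zpowers w)) := by
    intro w hsub
    have h1 : Subgroup.closure ({u,v} : Set F) ≤ Subgroup.zpowers w :=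
      (Subgroup.closure_le _).mpr hsub
    rw [htop] at h1
    exact zpowers_ne_top w (eq_top_iff.mpr h1)
  have hu1 : u ≠ 1 := by
    rintro rfl
    refine hle_z v ?_
    rintro x (rfl | hx)
    · exact one_mem _
    · simp only [Set.mem_singleton_iff] at hx; subst hx
      exact Subgroup.mem_zpowers _
  have hv1 : v ≠ 1 := by
    rintro rfl
    refine hle_z u ?_
    rintro x (rfl | hx)
    · exact Subgroup.mem_zpowers _
    · simp only [Set.mem_singleton_iff] at hx; subst hx
      exact one_mem _
  have hvu : v ≠ u := by
    rintro rfl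
    refine hle_z v ?_
    rintro x (rfl | hx)
    · exact Subgroup.mem_zpowers _
    · simp only [Set.mem_singleton_iff] at hx; subst hx
      exact Subgroup.mem_zpowers _
  have hvui : v ≠ u⁻¹ := by
    rintro rfl
    refine hle_z u ?_
    rintro x (rfl | hx)
    · exact Subgroup.mem_zpowers _
    · simp only [Set.mem_singleton_iff] at hx; subst hx
      exact inv_mem (Subgroup.mem_zpowers _)
  by_cases hred : ∃ P' : F × F, Reach (u,v) P' ∧ nl P'.1 + nl P'.2 < nl u + nl v
  · obtain ⟨⟨u', v'⟩, hr, hlt⟩ := hred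
    simp only at hlt
    have htop' : Subgroup.closure ({u', v'} : Set F) = ⊤ := by
      have := reach_closure hr (by simpa using htop)
      simpa using this
    exact reach_good hr (IH (nl u' + nl v') (by omega) u' v' le_rfl htop')
  · push_neg at hred
    have stuck : ∀ u' v' : F, Reach (u,v) (u',v') → nl u + nl v ≤ nl u' + nl v' := by
      intro u' v' hr
      have := hred (u', v') hr
      simpa using this
    have r_pp : Reach (u,v) (u,v) := Relation.ReflTransGen.refl
    have r_pm : Reach (u,v) (u,v⁻¹) := reach_invR u v
    have r_mp : Reach (u,v) (u⁻¹,v) := reach_invL u v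
    have r_mm : Reach (u,v) (u⁻¹,v⁻¹) := (reach_invL u v).trans' (reach_invR u⁻¹ v)
    have r_s_pp : Reach (u,v) (v,u) := reach_swap u v
    have r_s_pm : Reach (u,v) (v,u⁻¹) := (reach_swap u v).trans' (reach_invR v u)
    have r_s_mp : Reach (u,v) (v⁻¹,u) := (reach_swap u v).trans' (reach_invL v u)
    have r_s_mm : Reach (u,v) (v⁻¹,u⁻¹) :=
      ((reach_swap u v).trans' (reach_invL v u)).trans' (reach_invR v⁻¹ u)
    have key1 : ∀ x y : F, Reach (u,v) (x,y) → nl x + nl y = nl u + nl v →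
        nl x ≤ nl (x*y) ∧ nl y ≤ nl (x*y) := by
      intro x y hr heq
      constructor
      · have := stuck (x*y) y (hr.trans' (reach_mulLr x y)); omega
      · have := stuck x (x*y) (hr.trans' (reach_mulRl x y)); omega
    have hsq : ∀ x : F, nl x ≤ nl (x * x) := fun x => nl_sq_ge x (lemC' x x)
    have sqinv : ∀ w : F, w⁻¹ * w⁻¹ = (w*w)⁻¹ := fun w => by group
    have H1 : ∀ x ∈ Sset u v, ∀ y ∈ Sset u v, x*y ≠ 1 →
        nl x ≤ nl (x*y) ∧ nl y ≤ nl (x*y) := by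
      intro x hx y hy hxy
      rcases hx with rfl | rfl | rfl | rfl <;> rcases hy with rfl | rfl | rfl | rfl <;>
      first
        | exact absurd (mul_inv_cancel _) hxy
        | exact absurd (inv_mul_cancel _) hxy
        | exact ⟨hsq _, hsq _⟩
        | (rw [sqinv, nl_inv, nl_inv]; exact ⟨hsq _, hsq _⟩)
        | exact key1 _ _ r_pp (by (try simp only [nl_inv]); try omega)
        | exact key1 _ _ r_pm (by (try simp only [nl_inv]); try omega)
        | exact key1 _ _ r_mp (by (try simp only [nl_inv]); try omega)
        | exact key1 _ _ r_mm (by (try simp only [nl_inv]); try omega)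
        | exact key1 _ _ r_s_pp (by (try simp only [nl_inv]); try omega)
        | exact key1 _ _ r_s_pm (by (try simp only [nl_inv]); try omega)
        | exact key1 _ _ r_s_mp (by (try simp only [nl_inv]); try omega)
        | exact key1 _ _ r_s_mm (by (try simp only [nl_inv]); try omega)
    have H2 : ∀ x ∈ Sset u v, ∀ y ∈ Sset u v, ∀ z ∈ Sset u v, x*y ≠ 1 → y*z ≠ 1 →
        nl x + nl z < nl (x*y) + nl (y*z) := by
      intro x hx y hy z hz hxy hyz
      by_contra hcon
      push_neg at hcon
      have h1a := (H1 x hx y hy hxy).1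
      have h1b := (H1 x hx y hy hxy).2
      have h1c := (H1 y hy z hz hyz).1
      have h1d := (H1 y hy z hz hyz).2
      have e1 : nl (x*y) = nl x := by omega
      have e2 : nl (y*z) = nl z := by omega
      obtain ⟨p₁, c₁, q₁, hx1, hy1, hxy1⟩ := lemC' x y
      obtain ⟨p₂, c₂, q₂, hy2, hz2, hyz2⟩ := lemC' y z
      have l1 : nl x = p₁.length + c₁.length := by rw [nl, hx1]; simp
      have l2 : nl y = c₁.length + q₁.length := by
        rw [nl, hy1]; simp [FreeGroup.invRev_length]
      have l3 : nl (x*y) = p₁.length + q₁.length := by rw [nl, hxy1]; simp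
      have l4 : nl y = p₂.length + c₂.length := by rw [nl, hy2]; simp
      have l5 : nl z = c₂.length + q₂.length := by
        rw [nl, hz2]; simp [FreeGroup.invRev_length]
      have l6 : nl (y*z) = p₂.length + q₂.length := by rw [nl, hyz2]; simp
      have hk1 : c₁.length = q₁.length := by omega
      have hk2 : p₂.length = c₂.length := by omega
      have hkk : c₁.length = c₂.length := by omega
      have hy12 : invRev c₁ ++ q₁ = p₂ ++ c₂ := by rw [← hy1, ← hy2]
      obtain ⟨hP, hQ⟩ := List.append_inj hy12
        (by rw [FreeGroup.invRev_length]; omega)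
      -- y.toWord = P ++ Q with P := invRev c₁, Q := q₁
      have hyP : y.toWord = invRev c₁ ++ q₁ := hy1
      have hPQlen : (invRev c₁).length = q₁.length := by
        rw [FreeGroup.invRev_length]; omega
      have hyne : y ≠ 1 := Sset_ne_one hu1 hv1 hy
      have hk : 1 ≤ (invRev c₁).length := by
        rw [FreeGroup.invRev_length]
        rcases Nat.eq_zero_or_pos c₁.length with h0 | h1
        · exfalso
          apply hyne
          apply nl_eq_zero.mp
          omega
        · exact h1
      have hx1' : x.toWord = p₁ ++ invRev (invRev c₁) := by
        rw [FreeGroup.invRev_invRev]; exact hx1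
      have hz2' : z.toWord = invRev q₁ ++ q₂ := by rw [hz2, ← hQ]
      -- helper contradictions
      have notred : ∀ (P' Q' : Wd), y.toWord = P' ++ Q' → P' ≠ [] → Q' = invRev P' → False := by
        intro P' Q' h hPne hQe
        have hr := reduced_toWord y
        rw [h, hQe] at hr
        exact not_reduced_cancel P' hPne hr
      have hPne : invRev c₁ ≠ [] := by
        intro h0
        rw [h0] at hk
        simp at hk
      have contra1 : x.toWord = y.toWord → False := by
        intro hEq
        have h12 : p₁ ++ invRev (invRev c₁) = invRev c₁ ++ q₁ := by
          rw [← hx1', hEq, hyP]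
        obtain ⟨-, h2⟩ := List.append_inj' h12
          (by rw [FreeGroup.invRev_length, FreeGroup.invRev_length]; omega)
        exact notred (invRev c₁) q₁ hyP hPne h2.symm
      have contra2 : z.toWord = y.toWord → False := by
        intro hEq
        have h12 : invRev q₁ ++ q₂ = invRev c₁ ++ q₁ := by rw [← hz2', hEq, hyP]
        obtain ⟨h2, -⟩ := List.append_inj h12
          (by rw [FreeGroup.invRev_length, FreeGroup.invRev_length]; omega)
        have : y.toWord = invRev q₁ ++ q₁ := by rw [hyP, h2]
        exact notred (invRev q₁) q₁ this
          (by intro h0; rw [h0] at h2; rw [← h2] at hPne; exact hPne rfl)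
          (by rw [FreeGroup.invRev_invRev])
      have contra3 : z.toWord = invRev x.toWord → False := by
        intro hEq
        have hzz : z.toWord = invRev c₁ ++ invRev p₁ := by
          rw [hEq, hx1', invRev_append, FreeGroup.invRev_invRev]
        have h12 : invRev q₁ ++ q₂ = invRev c₁ ++ invRev p₁ := by rw [← hz2', hzz]
        obtain ⟨h2, -⟩ := List.append_inj h12
          (by rw [FreeGroup.invRev_length, FreeGroup.invRev_length]; omega)
        have : y.toWord = invRev q₁ ++ q₁ := by rw [hyP, ← h2]
        exact notred (invRev q₁) q₁ this
          (by intro h0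
              have : q₁.length = 0 := by
                have := congrArg List.length h0
                rw [FreeGroup.invRev_length] at this
                simpa using this
              rw [FreeGroup.invRev_length] at hk
              omega)
          (by rw [FreeGroup.invRev_invRev])
      have useKey : z = x → Reach (u,v) (y,x) → nl y + nl x = nl u + nl v → False := by
        intro hzx hrxy htot
        have hxne : x ≠ y⁻¹ := by
          intro h0
          apply hxy
          rw [h0]
          simp
        have hlen2k : 2 * (invRev c₁).length ≤ nl x := by
          rw [FreeGroup.invRev_length]
          omega
        obtain ⟨u', v', hr', hlt'⟩ := keyA y x (invRev c₁) q₁ p₁ q₂ hyP hPQlen hk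
          hx1' (by rw [← hzx]; exact hz2') hlen2k hxne
        have := stuck u' v' (hrxy.trans' hr')
        omega
      rcases hy with rfl | rfl | rfl | rfl <;> rcases hx with rfl | rfl | rfl | rfl <;>
        rcases hz with rfl | rfl | rfl | rfl <;>
      first
        | exact absurd (mul_inv_cancel _) hxy
        | exact absurd (inv_mul_cancel _) hxy
        | exact absurd (mul_inv_cancel _) hyz
        | exact absurd (inv_mul_cancel _) hyz
        | exact contra1 rfl
        | exact contra2 rfl
        | exact useKey rfl r_pp (by (try simp only [nl_inv]); try omega)
        | exact useKey rfl r_pm (by (try simp only [nl_inv]); try omega)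
        | exact useKey rfl r_mp (by (try simp only [nl_inv]); try omega)
        | exact useKey rfl r_mm (by (try simp only [nl_inv]); try omega)
        | exact useKey rfl r_s_pp (by (try simp only [nl_inv]); try omega)
        | exact useKey rfl r_s_pm (by (try simp only [nl_inv]); try omega)
        | exact useKey rfl r_s_mp (by (try simp only [nl_inv]); try omega)
        | exact useKey rfl r_s_mm (by (try simp only [nl_inv]); try omega)
        | exact contra3 (FreeGroup.toWord_inv _)
        | exact contra3 (by rw [FreeGroup.toWord_inv, FreeGroup.invRev_invRev])
    -- survival: every length-1 element lies in Sset
    have hSurv : ∀ g : F, nl g = 1 → g ∈ Sset u v := by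
      intro g hg1
      have hgmem : g ∈ Subgroup.closure ({u,v} : Set F) := by rw [htop]; trivial
      obtain ⟨l, hmem, hch, hprod⟩ := closure_to_chain hgmem
      rcases List.eq_nil_or_concat' l with rfl | ⟨l', z, rfl⟩
      · exfalso
        simp at hprod
        rw [← hprod] at hg1
        rw [nl_one] at hg1
        exact one_ne_zero hg1.symm
      · obtain ⟨w, s, e, hW, hs, hwl, -, -, -⟩ := surv u v hu1 hv1 H1 H2 l' z
          (hmem z (by simp)) (fun x hx => hmem x (by simp [hx])) hch
        have hWlen : nl ((l' ++ [z]).prod) = w.length + s.length := by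
          rw [nl, hW]; simp
        rw [hprod] at hWlen
        have hs1 : 1 ≤ s.length := List.length_pos_iff.mpr hs
        have hw0 : w.length = 0 := by omega
        have hl'0 : l' = [] := by
          have : l'.length = 0 := by omega
          exact List.eq_nil_of_length_eq_zero this
        subst hl'0
        simp at hprod
        rw [← hprod]
        exact hmem z (by simp)
    have hA : (FreeGroup.of (0 : Fin 2) : F) ∈ Sset u v := by
      apply hSurv
      rw [nl, FreeGroup.toWord_of]
      rfl
    have hB : (FreeGroup.of (1 : Fin 2) : F) ∈ Sset u v := by
      apply hSurv
      rw [nl, FreeGroup.toWord_of]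
      rfl
    have hab : (FreeGroup.of (0 : Fin 2) : F) ≠ FreeGroup.of 1 := by
      intro h
      exact (by decide : (0 : Fin 2) ≠ 1) (FreeGroup.of_injective h)
    have habi : (FreeGroup.of (0 : Fin 2) : F) ≠ (FreeGroup.of 1)⁻¹ := by
      intro h
      have h2 := congrArg FreeGroup.toWord h
      rw [FreeGroup.toWord_of, FreeGroup.toWord_inv, FreeGroup.toWord_of,
        invRev_singleton] at h2
      simp at h2
    have hbai : (FreeGroup.of (1 : Fin 2) : F) ≠ (FreeGroup.of 0)⁻¹ := by
      intro h
      apply habi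
      rw [h]
      simp
    have goodbase : Good (FreeGroup.of (0 : Fin 2)) (FreeGroup.of (1 : Fin 2)) :=
      Or.inl (IsConj.refl _)
    have g_ab : Good (FreeGroup.of (0 : Fin 2)) (FreeGroup.of (1 : Fin 2)) := goodbase
    have g_abi : Good (FreeGroup.of (0:Fin 2)) (FreeGroup.of (1:Fin 2))⁻¹ :=
      reach_good (reach_invR' _ _) (by exact g_ab)
    have g_aib : Good (FreeGroup.of (0:Fin 2))⁻¹ (FreeGroup.of (1:Fin 2)) :=
      reach_good (reach_invL' _ _) (by exact g_ab)
    have g_aibi : Good (FreeGroup.of (0:Fin 2))⁻¹ (FreeGroup.of (1:Fin 2))⁻¹ :=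
      reach_good ((reach_invR' _ _).trans' (reach_invL' _ _)) (by exact g_ab)
    have g_ba : Good (FreeGroup.of (1:Fin 2)) (FreeGroup.of (0:Fin 2)) :=
      reach_good (reach_swap _ _) (by exact g_ab)
    have g_bai : Good (FreeGroup.of (1:Fin 2)) (FreeGroup.of (0:Fin 2))⁻¹ :=
      reach_good ((reach_invR' _ _).trans' (reach_swap _ _)) (by exact g_ab)
    have g_bia : Good (FreeGroup.of (1:Fin 2))⁻¹ (FreeGroup.of (0:Fin 2)) :=
      reach_good ((reach_invL' _ _).trans' (reach_swap _ _)) (by exact g_ab)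
    have g_biai : Good (FreeGroup.of (1:Fin 2))⁻¹ (FreeGroup.of (0:Fin 2))⁻¹ :=
      reach_good (((reach_invR' _ _).trans' (reach_invL' _ _)).trans' (reach_swap _ _))
        (by exact g_ab)
    have inv_eq : ∀ {x y : F}, x = y⁻¹ → y = x⁻¹ := by
      intro x y h; rw [h]; simp
    rcases hA with h1 | h1 | h1 | h1 <;> rcases hB with h2 | h2 | h2 | h2
    · exact absurd (h1.trans h2.symm) hab
    · exact absurd (by rw [← h1] at h2; exact h2) hbai
    · rw [← h1, ← h2]; exact g_ab
    · rw [← h1, inv_eq h2]; exact g_abi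
    · exact absurd (by rw [← h2] at h1; exact h1) habi
    · exact absurd (h1.trans h2.symm) hab
    · rw [inv_eq h1, ← h2]; exact g_aib
    · rw [inv_eq h1, inv_eq h2]; exact g_aibi
    · rw [← h2, ← h1]; exact g_ba
    · rw [inv_eq h2, ← h1]; exact g_bia
    · exact absurd (h1.trans h2.symm) hab
    · exact absurd (by rw [← h1] at h2; exact h2) hbai
    · rw [← h2, inv_eq h1]; exact g_bai
    · rw [inv_eq h2, inv_eq h1]; exact g_biai
    · exact absurd (by rw [← h2] at h1; exact h1) habi
    · exact absurd (h1.trans h2.symm) hab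


theorem closure_of_top : Subgroup.closure ({FreeGroup.of 0, FreeGroup.of 1} : Set F) = ⊤ := by
  rw [eq_top_iff]
  intro x _
  induction x using FreeGroup.induction_on with
  | C1 => exact one_mem _
  | of i =>
    fin_cases i
    · exact Subgroup.subset_closure (by left; rfl)
    · exact Subgroup.subset_closure (by right; rfl)
  | inv_of i ih => exact inv_mem (ih trivial)
  | mul x y ihx ihy => exact mul_mem (ihx trivial) (ihy trivial)

end NielsenPf

open NielsenPf in
/-- For every automorphism `φ` of the free group `F₂ = F(a,b)`, the image `φ([a,b])` of the
commutator `[a,b] = aba⁻¹b⁻¹` is conjugate to `[a,b]` or to `[a,b]⁻¹`. -/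
theorem aut_commutator_conj (φ : MulAut (FreeGroup (Fin 2)))
    (a b : FreeGroup (Fin 2)) (ha : a = FreeGroup.of 0) (hb : b = FreeGroup.of 1) :
    IsConj (φ ⁅a, b⁆) ⁅a, b⁆ ∨ IsConj (φ ⁅a, b⁆) ⁅a, b⁆⁻¹ := by
  subst ha hb
  have himg : ({φ (FreeGroup.of 0), φ (FreeGroup.of 1)} : Set F) =
      φ.toMonoidHom '' {FreeGroup.of 0, FreeGroup.of 1} := by
    rw [Set.image_insert_eq, Set.image_singleton]
    rfl
  have htop : Subgroup.closure ({φ (FreeGroup.of 0), φ (FreeGroup.of 1)} : Set F) = ⊤ := by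
    rw [himg, ← MonoidHom.map_closure, closure_of_top,
      Subgroup.map_top_of_surjective _ (MulEquiv.surjective φ)]
  have hg : Good (φ (FreeGroup.of 0)) (φ (FreeGroup.of 1)) :=
    main_good (nl (φ (FreeGroup.of 0)) + nl (φ (FreeGroup.of 1))) _ _ le_rfl htop
  have hmap : φ ⁅(FreeGroup.of 0 : F), FreeGroup.of 1⁆ = ⁅φ (FreeGroup.of 0), φ (FreeGroup.of 1)⁆ :=
    map_commutatorElement (φ.toMonoidHom) _ _
  rcases hg with h | h
  · left; rw [hmap]; exact h
  · right; rw [hmap]; exact h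
end
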